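/- arXiv:2009.07579 — 5 statements merged into one kernel-verified Lean document; each statement's English description precedes it below -/
import Mathlib

section
/- Suppose t_{k+1} > λ t_k > 0 for all k with λ > 1000, μ_{k+1}/μ_k > κ t_{k+1}/t_k with κ > 10, and μ_{k+1}/t_{k+1}^2 < θ μ_k/t_k^2 with 10/λ < θ < 1/100. Then the points s_n produced by one step of the Stieltjes algorithm satisfy s_{n+1} - t_{n+1} > (μ_{n+1}/μ_n)·((λ-1)/λ)·(s_n - t_n); in particular s_{n+1} - t_{n+1} > λ(s_n - t_n) and s_{n+1} > λ s_n. -/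
/-!
Split the equation `∑ μ k / (t k - s m) = 0` at the zero `s m ∈ (t m, t (m + 1))`: the atoms left
of `s m` balance those to its right. By lacunarity the left side is `μ m / (s m - t m)` up to
`(2/9) μ m / t m`, and the right side is at least `μ (m + 1) / t (m + 1) ≥ 10 μ m / t m` plus the
tail over `k ≥ m + 2`. For consecutive zeros `s n < s (n + 1)` these tails differ by at most
`4 s (n + 1) ∑ μ k / t k ^ 2`, which the decay of `μ k / t k ^ 2` makes small against
`μ (n + 1) / t (n + 1)`. Hence `μ (n + 1) / (s (n + 1) - t (n + 1)) < μ n / (s n - t n)`, and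
`μ (n + 1) / μ n > κ λ` gives the rest.
-/

open Finset

theorem sum_Ico_le_of_le_mul_succ {g : ℕ → ℝ} {θ : ℝ} {a b : ℕ} (hab : a ≤ b)
    (hg : ∀ k ∈ Ico a b, g k ≤ θ * g (k + 1)) :
    (1 - θ) * ∑ k ∈ Ico a b, g k + θ * g a ≤ θ * g b := by
  induction b, hab using Nat.le_induction with
  | base => simp
  | succ b hab ih =>
    rw [sum_Ico_succ_top hab]
    have hb := hg b (mem_Ico.2 ⟨hab, b.lt_succ_self⟩)
    have := ih fun k hk => hg k (Ico_subset_Ico_right b.le_succ hk)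
    linarith

theorem sum_Ioc_le_of_succ_le_mul {f : ℕ → ℝ} {θ : ℝ} {a b : ℕ} (hab : a ≤ b)
    (hf : ∀ k ∈ Ico a b, f (k + 1) ≤ θ * f k) :
    (1 - θ) * ∑ k ∈ Ioc a b, f k + θ * f b ≤ θ * f a := by
  induction b, hab using Nat.le_induction with
  | base => simp
  | succ b hab ih =>
    rw [sum_Ioc_succ_top hab]
    have hb := hf b (mem_Ico.2 ⟨hab, b.lt_succ_self⟩)
    have := ih fun k hk => hf k (Ico_subset_Ico_right b.le_succ hk)
    linarith

theorem sum_Ico_div_sub_add_eq_of_sum_eq_zero {μ t : ℕ → ℝ} {s : ℝ} {m N : ℕ} (hm : 1 ≤ m)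
    (hmN : m ≤ N) (hroot : ∑ k ∈ Icc 1 N, μ k / (t k - s) = 0) :
    ∑ k ∈ Ico 1 m, μ k / (s - t k) + μ m / (s - t m) = ∑ k ∈ Ioc m N, μ k / (t k - s) := by
  have hIcc (n : ℕ) : Icc 1 n = Ioc 0 n := Icc_add_one_left_eq_Ioc 0 n
  have hneg (k : ℕ) : μ k / (s - t k) = -(μ k / (t k - s)) := by rw [← div_neg, neg_sub]
  rw [hIcc, ← sum_Ioc_consecutive _ (Nat.zero_le m) hmN, ← hIcc, ← Ico_add_one_right_eq_Icc,
    sum_Ico_succ_top hm] at hroot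
  simp only [hneg, sum_neg_distrib]
  linarith

theorem div_sub_sub_div_sub_le {x t s s' : ℝ} (hx : 0 ≤ x) (ht : 0 < t) (hs' : 0 ≤ s')
    (hss' : s' ≤ s) (hst : 2 * s ≤ t) :
    x / (t - s) - x / (t - s') ≤ 4 * s * (x / t ^ 2) := by
  have h1 : 0 < t - s := by linarith
  have h2 : 0 < t - s' := by linarith
  rw [div_sub_div _ _ h1.ne' h2.ne', div_le_iff₀ (by positivity), mul_div_assoc',
    div_mul_eq_mul_div, le_div_iff₀ (by positivity)]
  have hden : t ^ 2 ≤ 4 * ((t - s) * (t - s')) := by nlinarith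
  have hxs : 0 ≤ x * s := mul_nonneg hx (by linarith)
  nlinarith [mul_le_mul_of_nonneg_left hden hxs, mul_nonneg (mul_nonneg hx hs') (sq_nonneg t)]

theorem mul_le_of_mul_div_le_div {a b c x y : ℝ} (ha : 0 < a) (hab : a ≤ b) (hy : 0 ≤ y)
    (h : c * (x / a) ≤ y / b) : c * x ≤ y := by
  have hb : 0 < b := ha.trans_le hab
  calc c * x = c * (x / a) * a := by field_simp
    _ ≤ y / b * a := mul_le_mul_of_nonneg_right h ha.le
    _ ≤ y / b * b := mul_le_mul_of_nonneg_left hab (div_nonneg hy hb.le)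
    _ = y := div_mul_cancel₀ y hb.ne'

theorem sum_Ico_div_sub_le {μ t : ℕ → ℝ} {s : ℝ} {m : ℕ} (hm : 1 ≤ m)
    (hμ : ∀ k ∈ Icc 1 m, 0 ≤ μ k) (hgrow : ∀ k ∈ Ico 1 m, 10 * μ k ≤ μ (k + 1))
    (ht : ∀ k ∈ Ico 1 m, 2 * t k ≤ t m) (htm : 0 < t m) (hs : t m ≤ s) :
    ∑ k ∈ Ico 1 m, μ k / (s - t k) ≤ 2 / 9 * (μ m / t m) := by
  have hterm : ∀ k ∈ Ico 1 m, μ k / (s - t k) ≤ 2 / t m * μ k := fun k hk => by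
    have hμk := hμ k (Ico_subset_Icc_self hk)
    calc μ k / (s - t k) ≤ μ k / (t m / 2) :=
          div_le_div_of_nonneg_left hμk (by positivity) (by linarith [ht k hk])
      _ = 2 / t m * μ k := by ring
  have hgeom := sum_Ico_le_of_le_mul_succ (g := μ) (θ := 1 / 10) hm fun k hk => by
    linarith [hgrow k hk]
  have hμ1 := hμ 1 (mem_Icc.2 ⟨le_rfl, hm⟩)
  calc ∑ k ∈ Ico 1 m, μ k / (s - t k) ≤ 2 / t m * ∑ k ∈ Ico 1 m, μ k := by
        rw [mul_sum]; exact sum_le_sum hterm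
    _ ≤ 2 / t m * (μ m / 9) := by gcongr; linarith
    _ = 2 / 9 * (μ m / t m) := by ring

theorem sum_div_sub_le_sum_div_sub_add {ι : Type*} (S : Finset ι) {μ t : ι → ℝ} {s s' : ℝ}
    (hμ : ∀ k ∈ S, 0 ≤ μ k) (ht : ∀ k ∈ S, 0 < t k) (hst : ∀ k ∈ S, 2 * s ≤ t k)
    (hs' : 0 ≤ s') (hss' : s' ≤ s) :
    ∑ k ∈ S, μ k / (t k - s) ≤ ∑ k ∈ S, μ k / (t k - s') + 4 * s * ∑ k ∈ S, μ k / t k ^ 2 := by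
  rw [mul_sum, ← sum_add_distrib]
  refine sum_le_sum fun k hk => ?_
  linarith [div_sub_sub_div_sub_le (hμ k hk) (ht k hk) hs' hss' (hst k hk)]

/-- Atoms `μ k` at points `t k`, `1 ≤ k ≤ N`. The ratios `4` and `10` are what the estimates need
of the hypotheses `t (k + 1) > λ t k` and `μ (k + 1) / μ k > κ t (k + 1) / t k`. -/
structure LacunaryMeasure (N : ℕ) (μ t : ℕ → ℝ) : Prop where
  mass_pos : ∀ k ∈ Icc 1 N, 0 < μ k
  pos : ∀ k ∈ Icc 1 N, 0 < t k
  four_mul_le : ∀ k ∈ Ico 1 N, 4 * t k ≤ t (k + 1)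
  ten_mul_div_le : ∀ k ∈ Ico 1 N, 10 * (μ k / t k) ≤ μ (k + 1) / t (k + 1)

namespace LacunaryMeasure

variable {N : ℕ} {μ t : ℕ → ℝ}

theorem of_ratios {lam kap : ℝ} (hlam : 4 ≤ lam) (hkap : 10 ≤ kap) (hN : 2 ≤ N)
    (ht : ∀ k ∈ Icc 1 (N - 1), lam * t k < t (k + 1) ∧ 0 < t k)
    (hμ : ∀ k ∈ Icc 1 N, 0 < μ k)
    (hgrow : ∀ k ∈ Icc 1 (N - 1), kap * (t (k + 1) / t k) < μ (k + 1) / μ k) :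
    LacunaryMeasure N μ t := by
  have hIco {k : ℕ} (hk : k ∈ Ico 1 N) : k ∈ Icc 1 (N - 1) := by
    rw [mem_Ico] at hk; exact mem_Icc.2 ⟨hk.1, by omega⟩
  have hpos : ∀ k ∈ Icc 1 N, 0 < t k := fun k hk => by
    obtain ⟨hk1, hkN⟩ := mem_Icc.1 hk
    rcases hkN.lt_or_eq with hkN | rfl
    · exact (ht k (hIco (mem_Ico.2 ⟨hk1, hkN⟩))).2
    · obtain ⟨hstep, htk⟩ := ht (k - 1) (mem_Icc.2 ⟨by omega, le_rfl⟩)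
      rw [Nat.sub_add_cancel (by omega)] at hstep
      nlinarith
  refine ⟨hμ, hpos, fun k hk => ?_, fun k hk => ?_⟩
  · obtain ⟨hstep, htk⟩ := ht k (hIco hk)
    nlinarith
  · obtain ⟨hk1, hkN⟩ := mem_Ico.1 hk
    have htk := hpos k (mem_Icc.2 ⟨hk1, hkN.le⟩)
    have htk1 := hpos (k + 1) (mem_Icc.2 ⟨by omega, hkN⟩)
    have hμk := hμ k (mem_Icc.2 ⟨hk1, hkN.le⟩)
    have h := hgrow k (hIco hk)
    rw [lt_div_iff₀ hμk] at h
    rw [le_div_iff₀ htk1]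
    have : kap * (μ k / t k) * t (k + 1) = kap * (t (k + 1) / t k) * μ k := by ring
    have : 0 ≤ μ k / t k * t (k + 1) := by positivity
    nlinarith

theorem four_mul_le_of_lt (h : LacunaryMeasure N μ t) {i j : ℕ} (hi : 1 ≤ i) (hij : i < j)
    (hj : j ≤ N) : 4 * t i ≤ t j := by
  induction j, hij using Nat.le_induction with
  | base => exact h.four_mul_le i (mem_Ico.2 ⟨hi, hj⟩)
  | succ j hij ih =>
    have := h.four_mul_le j (mem_Ico.2 ⟨by omega, hj⟩)
    have := h.pos j (mem_Icc.2 ⟨by omega, by omega⟩)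
    linarith [ih (by omega)]

theorem ten_mul_le (h : LacunaryMeasure N μ t) {k : ℕ} (hk : k ∈ Ico 1 N) :
    10 * μ k ≤ μ (k + 1) := by
  obtain ⟨hk1, hkN⟩ := mem_Ico.1 hk
  have htk := h.pos k (mem_Icc.2 ⟨hk1, hkN.le⟩)
  refine mul_le_of_mul_div_le_div htk ?_ (h.mass_pos (k + 1) (mem_Icc.2 ⟨by omega, hkN⟩)).le
    (h.ten_mul_div_le k hk)
  linarith [h.four_mul_le k hk]

variable {m : ℕ} {s : ℝ}

theorem half_div_add_sum_le_div_sub (h : LacunaryMeasure N μ t) (hm : 1 ≤ m) (hmN : m < N)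
    (hroot : ∑ k ∈ Icc 1 N, μ k / (t k - s) = 0) (hs : t m < s ∧ s < t (m + 1)) :
    μ (m + 1) / t (m + 1) / 2 + ∑ k ∈ Ioc (m + 1) N, μ k / (t k - s) ≤ μ m / (s - t m) := by
  have hsplit := sum_Ico_div_sub_add_eq_of_sum_eq_zero hm hmN.le hroot
  rw [← sum_Ioc_consecutive _ m.le_succ hmN, Nat.Ioc_succ_singleton, sum_singleton] at hsplit
  have htm := h.pos m (mem_Icc.2 ⟨hm, hmN.le⟩)
  have htm1 := h.pos (m + 1) (mem_Icc.2 ⟨by omega, hmN⟩)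
  have hμm1 := h.mass_pos (m + 1) (mem_Icc.2 ⟨by omega, hmN⟩)
  have htail := sum_Ico_div_sub_le (s := s) hm
    (fun k hk => (h.mass_pos k (Icc_subset_Icc_right hmN.le hk)).le)
    (fun k hk => h.ten_mul_le (Ico_subset_Ico_right hmN.le hk))
    (fun k hk => by
      obtain ⟨hk1, hkm⟩ := mem_Ico.1 hk
      have := h.pos k (mem_Icc.2 ⟨hk1, by omega⟩)
      linarith [h.four_mul_le_of_lt hk1 hkm hmN.le])
    htm hs.1.le
  have hgrow := h.ten_mul_div_le m (mem_Ico.2 ⟨hm, hmN⟩)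
  have hnext : μ (m + 1) / t (m + 1) ≤ μ (m + 1) / (t (m + 1) - s) :=
    div_le_div_of_nonneg_left hμm1.le (by linarith) (by linarith)
  have : 0 < μ (m + 1) / t (m + 1) := by positivity
  linarith

theorem lt_two_mul_of_sum_eq_zero (h : LacunaryMeasure N μ t) (hm : 1 ≤ m) (hmN : m < N)
    (hroot : ∑ k ∈ Icc 1 N, μ k / (t k - s) = 0) (hs : t m < s ∧ s < t (m + 1)) :
    s < 2 * t m := by
  have hlower := h.half_div_add_sum_le_div_sub hm hmN hroot hs
  have htail : 0 ≤ ∑ k ∈ Ioc (m + 1) N, μ k / (t k - s) := sum_nonneg fun k hk => by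
    obtain ⟨hk1, hkN⟩ := mem_Ioc.1 hk
    have := h.four_mul_le_of_lt (by omega) hk1 hkN
    have := h.pos (m + 1) (mem_Icc.2 ⟨by omega, hmN⟩)
    exact div_nonneg (h.mass_pos k (mem_Icc.2 ⟨by omega, hkN⟩)).le (by linarith)
  have hgrow := h.ten_mul_div_le m (mem_Ico.2 ⟨hm, hmN⟩)
  have htm := h.pos m (mem_Icc.2 ⟨hm, hmN.le⟩)
  have hμm := h.mass_pos m (mem_Icc.2 ⟨hm, hmN.le⟩)
  have hd : 0 < s - t m := by linarith
  have h5 : 5 * μ m / t m ≤ μ m / (s - t m) := by rw [mul_div_assoc]; linarith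
  rw [div_le_div_iff₀ htm hd] at h5
  have : 5 * (s - t m) ≤ t m := le_of_mul_le_mul_left (by linarith) hμm
  linarith

theorem div_sub_le_quarter_div_add_sum (h : LacunaryMeasure N μ t) {θ s' : ℝ} (hm : 1 ≤ m)
    (hmN : m < N) (hθ : θ < 1 / 100)
    (hdec : ∀ k ∈ Ico m N, μ (k + 1) / t (k + 1) ^ 2 ≤ θ * (μ k / t k ^ 2))
    (hroot : ∑ k ∈ Icc 1 N, μ k / (t k - s) = 0) (hs : t m < s) (hs2 : s < 2 * t m)
    (hs' : 0 ≤ s') (hs's : s' ≤ s) :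
    μ m / (s - t m) ≤ μ m / t m / 4 + ∑ k ∈ Ioc m N, μ k / (t k - s') := by
  have hsplit := sum_Ico_div_sub_add_eq_of_sum_eq_zero hm hmN.le hroot
  have htm := h.pos m (mem_Icc.2 ⟨hm, hmN.le⟩)
  have hμm := h.mass_pos m (mem_Icc.2 ⟨hm, hmN.le⟩)
  have hhead : 0 ≤ ∑ k ∈ Ico 1 m, μ k / (s - t k) := sum_nonneg fun k hk => by
    obtain ⟨hk1, hkm⟩ := mem_Ico.1 hk
    have := h.four_mul_le_of_lt hk1 hkm hmN.le
    have := h.pos k (mem_Icc.2 ⟨hk1, by omega⟩)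
    exact div_nonneg (h.mass_pos k (mem_Icc.2 ⟨hk1, by omega⟩)).le (by linarith)
  have hsub : Ioc m N ⊆ Icc 1 N := Ioc_subset_Icc_self.trans (Icc_subset_Icc_left hm)
  have hcmp := sum_div_sub_le_sum_div_sub_add (Ioc m N) (μ := μ) (t := t)
    (fun k hk => (h.mass_pos k (hsub hk)).le) (fun k hk => h.pos k (hsub hk))
    (fun k hk => by
      obtain ⟨hmk, hkN⟩ := mem_Ioc.1 hk
      linarith [h.four_mul_le_of_lt hm hmk hkN])
    hs' hs's
  have hb (k : ℕ) (hk : k ∈ Icc 1 N) : 0 < μ k / t k ^ 2 := by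
    have := h.pos k hk
    have := h.mass_pos k hk
    positivity
  have hθ0 : 0 < θ := pos_of_mul_pos_left
    ((hb (m + 1) (mem_Icc.2 ⟨by omega, hmN⟩)).trans_le (hdec m (mem_Ico.2 ⟨le_rfl, hmN⟩)))
    (hb m (mem_Icc.2 ⟨hm, hmN.le⟩)).le
  have hgeom := sum_Ioc_le_of_succ_le_mul (f := fun k => μ k / t k ^ 2) hmN.le hdec
  have hbN := hb N (mem_Icc.2 ⟨by omega, le_rfl⟩)
  have hB : 0 ≤ ∑ k ∈ Ioc m N, μ k / t k ^ 2 := sum_nonneg fun k hk => (hb k (hsub hk)).le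
  have hBle : ∑ k ∈ Ioc m N, μ k / t k ^ 2 ≤ μ m / t m ^ 2 / 50 := by
    nlinarith [mul_le_mul_of_nonneg_right hθ.le (hb m (mem_Icc.2 ⟨hm, hmN.le⟩)).le]
  have hsq : t m * (μ m / t m ^ 2) = μ m / t m := by field_simp
  have : 4 * s * ∑ k ∈ Ioc m N, μ k / t k ^ 2 ≤ 8 * t m * (μ m / t m ^ 2 / 50) :=
    mul_le_mul (by linarith) hBle hB (by positivity)
  have : 0 < μ m / t m := by positivity
  linarith

theorem div_sub_succ_lt_div_sub (h : LacunaryMeasure N μ t) {n : ℕ} {θ s' : ℝ} (hn : 1 ≤ n)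
    (hnN : n + 2 ≤ N) (hθ : θ < 1 / 100)
    (hdec : ∀ k ∈ Ico (n + 1) N, μ (k + 1) / t (k + 1) ^ 2 ≤ θ * (μ k / t k ^ 2))
    (hroot : ∑ k ∈ Icc 1 N, μ k / (t k - s) = 0) (hroot' : ∑ k ∈ Icc 1 N, μ k / (t k - s') = 0)
    (hs : t n < s ∧ s < t (n + 1)) (hs' : t (n + 1) < s' ∧ s' < t (n + 2)) :
    μ (n + 1) / (s' - t (n + 1)) < μ n / (s - t n) := by
  have hlower := h.half_div_add_sum_le_div_sub hn (by omega) hroot hs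
  have hs'2 := h.lt_two_mul_of_sum_eq_zero (by omega) (by omega) hroot' hs'
  have htn := h.pos n (mem_Icc.2 ⟨hn, by omega⟩)
  have hupper := h.div_sub_le_quarter_div_add_sum (by omega) (by omega) hθ hdec hroot' hs'.1 hs'2
    (s' := s) (by linarith) (by linarith)
  have : 0 < μ (n + 1) / t (n + 1) := by
    have := h.pos (n + 1) (mem_Icc.2 ⟨by omega, by omega⟩)
    have := h.mass_pos (n + 1) (mem_Icc.2 ⟨by omega, by omega⟩)
    positivity
  linarith

end LacunaryMeasure

theorem stmt2_general (N n : ℕ) (lam kap th : ℝ) (μ t s : ℕ → ℝ)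
    (hlam : 1000 < lam) (hkap : 10 < kap) (hth2 : th < 1 / 100)
    (ht : ∀ k ∈ Finset.Icc 1 (N - 1), lam * t k < t (k + 1) ∧ 0 < t k)
    (hμpos : ∀ k ∈ Finset.Icc 1 N, 0 < μ k)
    (hgrow : ∀ k ∈ Finset.Icc 1 (N - 1), kap * (t (k + 1) / t k) < μ (k + 1) / μ k)
    (hdec : ∀ k ∈ Finset.Icc 1 (N - 1), μ (k + 1) / t (k + 1) ^ 2 < th * (μ k / t k ^ 2))
    (hroot : ∀ m ∈ Finset.Icc 1 (N - 1), ∑ k ∈ Finset.Icc 1 N, μ k / (t k - s m) = 0)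
    (hint : ∀ m ∈ Finset.Icc 1 (N - 1), t m < s m ∧ s m < t (m + 1))
    (hn : 1 ≤ n) (hnN : n ≤ N - 2) :
    μ (n + 1) / μ n * ((lam - 1) / lam) * (s n - t n) < s (n + 1) - t (n + 1) ∧
    lam * (s n - t n) < s (n + 1) - t (n + 1) ∧
    lam * s n < s (n + 1) := by
  have hmem {k : ℕ} (hk1 : 1 ≤ k) (hkN : k < N) : k ∈ Icc 1 (N - 1) := mem_Icc.2 ⟨hk1, by omega⟩
  have hL := LacunaryMeasure.of_ratios (by linarith) hkap.le (by omega) ht hμpos hgrow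
  have hkey := hL.div_sub_succ_lt_div_sub hn (by omega) hth2
    (fun k hk => by obtain ⟨hk1, hkN⟩ := mem_Ico.1 hk; exact (hdec k (hmem (by omega) hkN)).le)
    (hroot n (hmem hn (by omega))) (hroot (n + 1) (hmem (by omega) (by omega)))
    (hint n (hmem hn (by omega))) (hint (n + 1) (hmem (by omega) (by omega)))
  obtain ⟨hsn, -⟩ := hint n (hmem hn (by omega))
  obtain ⟨hsn1, -⟩ := hint (n + 1) (hmem (by omega) (by omega))
  obtain ⟨hstep, htn⟩ := ht n (hmem hn (by omega))
  have hμn := hμpos n (mem_Icc.2 ⟨hn, by omega⟩)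
  rw [div_lt_div_iff₀ (by linarith) (by linarith)] at hkey
  have hratio : μ (n + 1) / μ n * (s n - t n) < s (n + 1) - t (n + 1) := by
    rw [div_mul_eq_mul_div, div_lt_iff₀ hμn]; linarith
  have hlam_lt : lam < μ (n + 1) / μ n := by
    have := hgrow n (hmem hn (by omega))
    have := (lt_div_iff₀ htn).2 hstep
    nlinarith
  have hgap : lam * (s n - t n) < s (n + 1) - t (n + 1) :=
    (mul_lt_mul_of_pos_right hlam_lt (sub_pos.2 hsn)).trans hratio
  refine ⟨?_, hgap, by linarith⟩
  calc μ (n + 1) / μ n * ((lam - 1) / lam) * (s n - t n)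
      = (lam - 1) / lam * (μ (n + 1) / μ n * (s n - t n)) := by ring
    _ < μ (n + 1) / μ n * (s n - t n) :=
        mul_lt_of_lt_one_left (mul_pos (by linarith) (sub_pos.2 hsn))
          ((div_lt_one (by linarith)).2 (by linarith))
    _ < s (n + 1) - t (n + 1) := hratio

/-- Invariance of the lacunarity parameter under one Stieltjes step. -/
theorem stmt2 (N n : ℕ) (lam kap th : ℝ) (μ t s : ℕ → ℝ)
    (hlam : 1000 < lam) (hkap : 10 < kap) (hth1 : 10 / lam < th) (hth2 : th < 1 / 100)
    (ht : ∀ k ∈ Finset.Icc 1 (N - 1), lam * t k < t (k + 1) ∧ 0 < t k)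
    (hμpos : ∀ k ∈ Finset.Icc 1 N, 0 < μ k)
    (hgrow : ∀ k ∈ Finset.Icc 1 (N - 1), kap * (t (k + 1) / t k) < μ (k + 1) / μ k)
    (hdec : ∀ k ∈ Finset.Icc 1 (N - 1), μ (k + 1) / t (k + 1) ^ 2 < th * (μ k / t k ^ 2))
    (hroot : ∀ m ∈ Finset.Icc 1 (N - 1), ∑ k ∈ Finset.Icc 1 N, μ k / (t k - s m) = 0)
    (hint : ∀ m ∈ Finset.Icc 1 (N - 1), t m < s m ∧ s m < t (m + 1))
    (hn : 1 ≤ n) (hnN : n ≤ N - 2) :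
    μ (n + 1) / μ n * ((lam - 1) / lam) * (s n - t n) < s (n + 1) - t (n + 1) ∧
    lam * (s n - t n) < s (n + 1) - t (n + 1) ∧
    lam * s n < s (n + 1) :=
  stmt2_general N n lam kap th μ t s hlam hkap hth2 ht hμpos hgrow hdec hroot hint hn hnN
end

section
/- Under one step of the Stieltjes algorithm, if t_{k+1} > λ t_k > 0 with λ > 1000, μ_{k+1}/μ_k > κ t_{k+1}/t_k with κ > 10, and μ_{k+1}/t_{k+1}^2 < θ μ_k/t_k^2 with 10/λ < θ < 1/10, then the new weights w_n = (Σ_k μ_k/(t_k - s_n)^2)^{-1} satisfy w_{n+1}/w_n > μ_{n+1}/μ_n for all 1 ≤ n ≤ N-2. -/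
/-!
Write `S(x) = ∑ μ_k / (t_k - x)^2`, so that `w_m = 1 / S(s_m)` and the claim is
`μ_{n+1} S(s_{n+1}) < μ_n S(s_n)`. Let `P_m = ∑_{k > m} μ_k / (t_k - s_m)` and
`g = μ_{n+1} / t_{n+1}`. Since nodes and weights grow geometrically, the zero `s_m` lies below
`2 t_m`, far from all later nodes, so in `S(s_m)` and in the zero equation every term except the
pole term `μ_m / (s_m - t_m)` is negligible or part of a geometric tail. The zero equation then
makes the pole term almost `P_m`, which gives `μ_n S(s_n) ≥ (P_n - g/10)^2` and
`μ_{n+1} S(s_{n+1}) ≤ P_{n+1}^2 + g^2/5`. Comparing the two zeros term by term gives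
`P_{n+1} + 7g/10 ≤ P_n`; together with `g ≤ P_n` these force the claim.
-/

open Finset

section GeometricSums

variable {K : Type*} [Field K] [LinearOrder K] [IsStrictOrderedRing K] {a : ℕ → K} {r : K}
  {lo hi : ℕ}

theorem sum_Ico_le_div_of_mul_le_succ (hr : 1 < r) (hlo : lo ≤ hi) (h0 : 0 ≤ a lo)
    (h : ∀ k, lo ≤ k → k < hi → r * a k ≤ a (k + 1)) :
    ∑ k ∈ Ico lo hi, a k ≤ a hi / (r - 1) := by
  have hr' : 0 < r - 1 := sub_pos.2 hr
  induction hi, hlo using Nat.le_induction with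
  | base => simpa using div_nonneg h0 hr'.le
  | succ hi hlo ih =>
    rw [sum_Ico_succ_top hlo]
    have hstep := h hi hlo hi.lt_succ_self
    calc ∑ k ∈ Ico lo hi, a k + a hi ≤ a hi / (r - 1) + a hi := by
          gcongr; exact ih fun k hk hk' => h k hk (by omega)
      _ = r * a hi / (r - 1) := by field_simp; ring
      _ ≤ a (hi + 1) / (r - 1) := by gcongr

theorem sum_Ioc_le_div_of_mul_succ_le (hr : 1 < r) (hlo : lo ≤ hi) (h0 : 0 ≤ a hi)
    (h : ∀ k, lo ≤ k → k < hi → r * a (k + 1) ≤ a k) :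
    ∑ k ∈ Ioc lo hi, a k ≤ a lo / (r - 1) := by
  have hr' : 0 < r - 1 := sub_pos.2 hr
  -- the telescoped bound needs no sign condition, so it survives the induction
  suffices ∑ k ∈ Ioc lo hi, a k ≤ (a lo - a hi) / (r - 1) from
    this.trans (by gcongr; linarith)
  clear h0
  induction hi, hlo using Nat.le_induction with
  | base => simp
  | succ hi hlo ih =>
    rw [sum_Ioc_succ_top hlo]
    have hstep := h hi hlo hi.lt_succ_self
    calc ∑ k ∈ Ioc lo hi, a k + a (hi + 1) ≤ (a lo - a hi) / (r - 1) + a (hi + 1) := by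
          gcongr; exact ih fun k hk hk' => h k hk (by omega)
      _ ≤ (a lo - a (hi + 1)) / (r - 1) := by
          rw [div_add' _ _ _ hr'.ne', div_le_div_iff_of_pos_right hr']; nlinarith

end GeometricSums

theorem div_le_div_add_of_sub_le {K : Type*} [Field K] [LinearOrder K] [IsStrictOrderedRing K]
    {μ a b c d : K} (hμ : 0 ≤ μ) (hc : 0 < c) (hcb : c ≤ b)
    (hba : b ≤ a) (hab : a - b ≤ d) : μ / b ≤ μ / a + d * μ / c ^ 2 := by
  have hb : 0 < b := hc.trans_le hcb
  have ha : 0 < a := hb.trans_le hba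
  rw [div_add_div _ _ ha.ne' (by positivity), div_le_div_iff₀ hb (by positivity)]
  have hcc : c ^ 2 ≤ a * b := by nlinarith
  nlinarith [mul_le_mul_of_nonneg_left hab hμ,
    mul_le_mul_of_nonneg_left hcc (mul_nonneg hμ (sub_nonneg.2 hba))]

theorem sum_Icc_one_eq_sum_Icc_add_sum_Ioc {M : Type*} [AddCommMonoid M] (f : ℕ → M)
    {m N : ℕ} (hmN : m ≤ N) :
    ∑ k ∈ Icc 1 N, f k = ∑ k ∈ Icc 1 m, f k + ∑ k ∈ Ioc m N, f k := by
  rw [← Nat.zero_add 1, Icc_add_one_left_eq_Ioc, Icc_add_one_left_eq_Ioc,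
    sum_Ioc_consecutive f m.zero_le hmN]

theorem sum_Ioc_eq_add_sum_Ioc_succ {M : Type*} [AddCommMonoid M] (f : ℕ → M)
    {m N : ℕ} (hmN : m < N) :
    ∑ k ∈ Ioc m N, f k = f (m + 1) + ∑ k ∈ Ioc (m + 1) N, f k := by
  rw [← Icc_add_one_left_eq_Ioc, add_sum_Ioc_eq_sum_Icc hmN]

/-- The hypotheses of the theorem with `λ`, `κ`, `θ` replaced by `1000`, `10`, `1/10`, and the
growth of `μ_{k+1} / μ_k` rewritten as growth of `μ_k / t_k`. -/
structure Lacunary (N : ℕ) (μ t : ℕ → ℝ) : Prop where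
  t_one_pos : 0 < t 1
  μ_pos : ∀ k, 1 ≤ k → k ≤ N → 0 < μ k
  t_gap : ∀ k, 1 ≤ k → k < N → 1000 * t k < t (k + 1)
  μ_div_gap : ∀ k, 1 ≤ k → k < N → 10 * (μ k / t k) < μ (k + 1) / t (k + 1)
  μ_div_sq_gap : ∀ k, 1 ≤ k → k < N → 10 * (μ (k + 1) / t (k + 1) ^ 2) < μ k / t k ^ 2

theorem Lacunary.of_ratio_bounds {N : ℕ} {lam kap th : ℝ} {μ t : ℕ → ℝ} (hN : 2 ≤ N)
    (hlam : 1000 < lam) (hkap : 10 < kap) (hth : th < 1 / 10)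
    (ht : ∀ k ∈ Icc 1 (N - 1), lam * t k < t (k + 1) ∧ 0 < t k)
    (hμpos : ∀ k ∈ Icc 1 N, 0 < μ k)
    (hgrow : ∀ k ∈ Icc 1 (N - 1), kap * (t (k + 1) / t k) < μ (k + 1) / μ k)
    (hdec : ∀ k ∈ Icc 1 (N - 1), μ (k + 1) / t (k + 1) ^ 2 < th * (μ k / t k ^ 2)) :
    Lacunary N μ t := by
  have mem : ∀ k, 1 ≤ k → k < N → k ∈ Icc 1 (N - 1) := fun k hk hkN =>
    mem_Icc.2 ⟨hk, by omega⟩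
  have htk : ∀ k, 1 ≤ k → k < N → 0 < t k := fun k hk hkN => (ht k (mem k hk hkN)).2
  have htk1 : ∀ k, 1 ≤ k → k < N → 0 < t (k + 1) := fun k hk hkN =>
    (mul_pos (by linarith) (htk k hk hkN)).trans (ht k (mem k hk hkN)).1
  have hμ : ∀ k, 1 ≤ k → k ≤ N → 0 < μ k := fun k hk hkN =>
    hμpos k (mem_Icc.2 ⟨hk, hkN⟩)
  refine ⟨htk 1 le_rfl (by omega), hμ, fun k hk hkN => ?_, fun k hk hkN => ?_,
    fun k hk hkN => ?_⟩
  · nlinarith [(ht k (mem k hk hkN)).1, htk k hk hkN]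
  · have := htk k hk hkN
    have := htk1 k hk hkN
    have := hμ k hk hkN.le
    calc 10 * (μ k / t k) < kap * (μ k / t k) := by gcongr
      _ = kap * (t (k + 1) / t k) * (μ k / t (k + 1)) := by field_simp
      _ < μ (k + 1) / μ k * (μ k / t (k + 1)) := by gcongr; exact hgrow k (mem k hk hkN)
      _ = μ (k + 1) / t (k + 1) := by field_simp
  · have : 0 < μ k / t k ^ 2 := div_pos (hμ k hk hkN.le) (pow_pos (htk k hk hkN) 2)
    linarith [hdec k (mem k hk hkN), mul_lt_mul_of_pos_right hth this]

structure IsInterlacedZero (N : ℕ) (μ t : ℕ → ℝ) (m : ℕ) (x : ℝ) : Prop where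
  lt : t m < x
  lt_succ : x < t (m + 1)
  sum_eq_zero : ∑ k ∈ Icc 1 N, μ k / (t k - x) = 0

theorem IsInterlacedZero.sum_Icc_eq_sum_Ioc {N m : ℕ} {μ t : ℕ → ℝ} {x : ℝ}
    (hx : IsInterlacedZero N μ t m x) (hmN : m ≤ N) :
    ∑ k ∈ Icc 1 m, μ k / (x - t k) = ∑ k ∈ Ioc m N, μ k / (t k - x) := by
  have h := hx.sum_eq_zero
  rw [sum_Icc_one_eq_sum_Icc_add_sum_Ioc _ hmN] at h
  have hneg : ∑ k ∈ Icc 1 m, μ k / (t k - x) = -∑ k ∈ Icc 1 m, μ k / (x - t k) := by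
    rw [← sum_neg_distrib]
    exact sum_congr rfl fun k _ => by rw [← div_neg, neg_sub]
  linarith

namespace Lacunary

variable {N : ℕ} {μ t : ℕ → ℝ} (h : Lacunary N μ t)
include h

theorem t_pos {k : ℕ} (hk : 1 ≤ k) (hkN : k ≤ N) : 0 < t k := by
  induction k, hk using Nat.le_induction with
  | base => exact h.t_one_pos
  | succ k hk ih => linarith [h.t_gap k hk (by omega), ih (by omega)]

theorem t_gap_of_lt {i j : ℕ} (hi : 1 ≤ i) (hij : i < j) (hjN : j ≤ N) :
    1000 * t i < t j := by
  induction j, hij using Nat.le_induction with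
  | base => exact h.t_gap i hi (by omega)
  | succ j hij ih =>
    have := h.t_gap j (by omega) (by omega)
    have := h.t_pos (k := j) (by omega) (by omega)
    linarith [ih (by omega)]

theorem t_le_of_le {i j : ℕ} (hi : 1 ≤ i) (hij : i ≤ j) (hjN : j ≤ N) : t i ≤ t j := by
  rcases hij.eq_or_lt with rfl | hij
  · rfl
  · linarith [h.t_gap_of_lt hi hij hjN, h.t_pos hi (by omega)]

theorem μ_gap {k : ℕ} (hk : 1 ≤ k) (hkN : k < N) : 10000 * μ k < μ (k + 1) := by
  have htk := h.t_pos hk hkN.le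
  have htk1 := h.t_pos (k := k + 1) (by omega) hkN
  have hgap := h.t_gap k hk hkN
  have hμk := h.μ_pos k hk hkN.le
  have hdiv := h.μ_div_gap k hk hkN
  rw [mul_div_assoc', div_lt_div_iff₀ htk htk1] at hdiv
  nlinarith

theorem sum_Ico_μ_le {m : ℕ} (hm : 1 ≤ m) (hmN : m ≤ N) :
    ∑ k ∈ Ico 1 m, μ k ≤ μ m / 9999 := by
  have := sum_Ico_le_div_of_mul_le_succ (a := μ) (r := 10000) (by norm_num) hm
    (h.μ_pos 1 le_rfl (by omega)).le fun k hk hkm => (h.μ_gap hk (by omega)).le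
  norm_num at this
  exact this

theorem sum_Ioc_μ_div_sq_le {m : ℕ} (hm : 1 ≤ m) (hmN : m ≤ N) :
    ∑ k ∈ Ioc m N, μ k / t k ^ 2 ≤ μ m / t m ^ 2 / 9 := by
  have := sum_Ioc_le_div_of_mul_succ_le (a := fun k => μ k / t k ^ 2) (r := 10) (by norm_num) hmN
    (div_nonneg (h.μ_pos N (by omega) le_rfl).le (sq_nonneg _))
    fun k hk hkN => (h.μ_div_sq_gap k (by omega) hkN).le
  norm_num at this
  exact this

variable {m n : ℕ} {x y : ℝ}

theorem div_sub_pos_of_le (hx : IsInterlacedZero N μ t m x) (hmN : m < N) {k : ℕ}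
    (hk : 1 ≤ k) (hkm : k ≤ m) : 0 < μ k / (x - t k) :=
  div_pos (h.μ_pos k hk (by omega)) (by linarith [h.t_le_of_le hk hkm hmN.le, hx.lt])

theorem div_sub_pos_of_lt (hx : IsInterlacedZero N μ t m x) (hm : 1 ≤ m) {k : ℕ}
    (hmk : m < k) (hkN : k ≤ N) : 0 < μ k / (t k - x) :=
  div_pos (h.μ_pos k (by omega) hkN)
    (by linarith [h.t_le_of_le (i := m + 1) (by omega) hmk hkN, hx.lt_succ])

theorem sum_Ioc_div_nonneg (hx : IsInterlacedZero N μ t m x) (hm : 1 ≤ m) :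
    0 ≤ ∑ k ∈ Ioc m N, μ k / (t k - x) :=
  sum_nonneg fun _ hk => (h.div_sub_pos_of_lt hx hm (mem_Ioc.1 hk).1 (mem_Ioc.1 hk).2).le

theorem div_le_sum_Ioc (hx : IsInterlacedZero N μ t m x) (hm : 1 ≤ m) (hmN : m < N) :
    μ (m + 1) / (t (m + 1) - x) ≤ ∑ k ∈ Ioc m N, μ k / (t k - x) :=
  single_le_sum (f := fun k => μ k / (t k - x))
    (fun _ hk => (h.div_sub_pos_of_lt hx hm (mem_Ioc.1 hk).1 (mem_Ioc.1 hk).2).le)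
    (mem_Ioc.2 ⟨m.lt_succ_self, hmN⟩)

theorem div_le_sum_Icc (hx : IsInterlacedZero N μ t m x) (hm : 1 ≤ m) (hmN : m < N) :
    μ m / (x - t m) ≤ ∑ k ∈ Icc 1 m, μ k / (x - t k) :=
  single_le_sum (f := fun k => μ k / (x - t k))
    (fun _ hk => (h.div_sub_pos_of_le hx hmN (mem_Icc.1 hk).1 (mem_Icc.1 hk).2).le)
    (mem_Icc.2 ⟨hm, le_rfl⟩)

theorem sum_Icc_div_le (hx : IsInterlacedZero N μ t m x) (hmN : m < N) :
    ∑ k ∈ Icc 1 m, μ k / (x - t k) ≤ (∑ k ∈ Icc 1 m, μ k) / (x - t m) := by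
  rw [sum_div]
  refine sum_le_sum fun k hk => ?_
  obtain ⟨hk, hkm⟩ := mem_Icc.1 hk
  exact div_le_div_of_nonneg_left (h.μ_pos k hk (by omega)).le (by linarith [hx.lt])
    (by linarith [h.t_le_of_le hk hkm hmN.le])

theorem lt_two_mul (hx : IsInterlacedZero N μ t m x) (hm : 1 ≤ m) (hmN : m < N) :
    x < 2 * t m := by
  have htm := h.t_pos hm hmN.le
  have hμm := h.μ_pos m hm hmN.le
  have hμm1 := h.μ_pos (m + 1) (by omega) hmN
  have hxm := hx.lt
  have hxm1 := hx.lt_succ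
  have hmass : ∑ k ∈ Icc 1 m, μ k ≤ 2 * μ m := by
    rw [← sum_Ico_add_eq_sum_Icc hm]
    linarith [h.sum_Ico_μ_le hm hmN.le]
  -- the first term on the right of the zero equation is balanced by the whole mass on the left
  have hbalance : μ (m + 1) / (t (m + 1) - x) ≤ 2 * μ m / (x - t m) := by
    calc μ (m + 1) / (t (m + 1) - x) ≤ ∑ k ∈ Ioc m N, μ k / (t k - x) :=
          h.div_le_sum_Ioc hx hm hmN
      _ = ∑ k ∈ Icc 1 m, μ k / (x - t k) := (hx.sum_Icc_eq_sum_Ioc hmN.le).symm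
      _ ≤ (∑ k ∈ Icc 1 m, μ k) / (x - t m) := h.sum_Icc_div_le hx hmN
      _ ≤ 2 * μ m / (x - t m) := by gcongr
  rw [div_le_div_iff₀ (by linarith) (by linarith)] at hbalance
  have hgrowth := h.μ_div_gap m hm hmN
  rw [mul_div_assoc', div_lt_div_iff₀ htm (by linarith)] at hgrowth
  nlinarith

theorem le_sub_of_lt (hx : IsInterlacedZero N μ t m x) (hmN : m < N) {k : ℕ}
    (hk : 1 ≤ k) (hkm : k < m) : 9 / 10 * t m ≤ x - t k := by
  linarith [h.t_gap_of_lt hk hkm hmN.le, h.t_pos hk (by omega), hx.lt]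

theorem le_sub_of_gt (hx : IsInterlacedZero N μ t m x) (hm : 1 ≤ m) (hmN : m < N) {k : ℕ}
    (hmk : m < k) (hkN : k ≤ N) : 9 / 10 * t k ≤ t k - x := by
  linarith [h.t_gap_of_lt hm hmk hkN, h.t_pos hm (by omega), h.lt_two_mul hx hm hmN]

theorem μ_div_le_sum_Ioc (hx : IsInterlacedZero N μ t m x) (hm : 1 ≤ m) (hmN : m < N) :
    μ (m + 1) / t (m + 1) ≤ ∑ k ∈ Ioc m N, μ k / (t k - x) := by
  refine le_trans ?_ (h.div_le_sum_Ioc hx hm hmN)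
  have := h.t_pos hm hmN.le
  exact div_le_div_of_nonneg_left (h.μ_pos _ (by omega) hmN).le
    (by linarith [hx.lt_succ]) (by linarith [hx.lt])

theorem sum_Ioc_succ_add_le (hx : IsInterlacedZero N μ t n x)
    (hy : IsInterlacedZero N μ t (n + 1) y) (hn : 1 ≤ n) (hnN : n + 1 < N) :
    ∑ k ∈ Ioc (n + 1) N, μ k / (t k - y) + 7 / 10 * (μ (n + 1) / t (n + 1)) ≤
      ∑ k ∈ Ioc n N, μ k / (t k - x) := by
  have htn1 := h.t_pos (k := n + 1) (by omega) hnN.le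
  -- moving the pole from x to y perturbs each far term by at most (y - x) μ_k / (9 t_k / 10)^2
  have hterm : ∀ k ∈ Ioc (n + 1) N,
      μ k / (t k - y) ≤ μ k / (t k - x) + 200 / 81 * t (n + 1) * (μ k / t k ^ 2) := by
    intro k hk
    obtain ⟨hnk, hkN⟩ := mem_Ioc.1 hk
    have htk := h.t_pos (k := k) (by omega) hkN
    calc μ k / (t k - y)
        ≤ μ k / (t k - x) + 2 * t (n + 1) * μ k / (9 / 10 * t k) ^ 2 :=
          div_le_div_add_of_sub_le (h.μ_pos k (by omega) hkN).le (by positivity)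
            (h.le_sub_of_gt hy (by omega) hnN hnk hkN) (by linarith [hx.lt_succ, hy.lt])
            (by linarith [h.lt_two_mul hy (by omega) hnN, hx.lt, h.t_pos hn (by omega)])
      _ = μ k / (t k - x) + 200 / 81 * t (n + 1) * (μ k / t k ^ 2) := by
          field_simp; ring
  have hsum := sum_le_sum hterm
  rw [sum_add_distrib, ← mul_sum] at hsum
  have htail := h.sum_Ioc_μ_div_sq_le (m := n + 1) (by omega) hnN.le
  have hfirst : μ (n + 1) / t (n + 1) ≤ μ (n + 1) / (t (n + 1) - x) :=
    div_le_div_of_nonneg_left (h.μ_pos _ (by omega) hnN.le).le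
      (by linarith [hx.lt_succ]) (by linarith [hx.lt, h.t_pos hn (by omega)])
  have hg : t (n + 1) * (μ (n + 1) / t (n + 1) ^ 2 / 9) = μ (n + 1) / t (n + 1) / 9 := by
    field_simp
  rw [sum_Ioc_eq_add_sum_Ioc_succ _ (by omega : n < N)]
  have hg0 : 0 ≤ μ (n + 1) / t (n + 1) := div_nonneg (h.μ_pos _ (by omega) hnN.le).le htn1.le
  linarith [mul_le_mul_of_nonneg_left htail (by positivity : (0 : ℝ) ≤ 200 / 81 * t (n + 1))]

theorem div_sq_le_sum_div_sq {j : ℕ} (hj : 1 ≤ j) (hjN : j ≤ N) (x : ℝ) :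
    μ j / (t j - x) ^ 2 ≤ ∑ k ∈ Icc 1 N, μ k / (t k - x) ^ 2 :=
  single_le_sum (f := fun k => μ k / (t k - x) ^ 2)
    (fun k hk => div_nonneg (h.μ_pos k (mem_Icc.1 hk).1 (mem_Icc.1 hk).2).le (sq_nonneg _))
    (mem_Icc.2 ⟨hj, hjN⟩)

theorem sum_div_sq_pos (hx : IsInterlacedZero N μ t m x) (hm : 1 ≤ m) (hmN : m < N) :
    0 < ∑ k ∈ Icc 1 N, μ k / (t k - x) ^ 2 :=
  (div_pos (h.μ_pos m hm hmN.le) (sq_pos_of_neg (sub_neg.2 hx.lt))).trans_le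
    (h.div_sq_le_sum_div_sq hm hmN.le x)

theorem sq_sub_le_mul_sum_sq (hx : IsInterlacedZero N μ t n x) (hn : 1 ≤ n) (hnN : n < N) :
    (∑ k ∈ Ioc n N, μ k / (t k - x) - μ (n + 1) / t (n + 1) / 10) ^ 2 ≤
      μ n * ∑ k ∈ Icc 1 N, μ k / (t k - x) ^ 2 := by
  have htn := h.t_pos hn hnN.le
  have hμn := h.μ_pos n hn hnN.le
  have hnear : ∑ k ∈ Ico 1 n, μ k / (x - t k) ≤ μ n / t n := by
    calc ∑ k ∈ Ico 1 n, μ k / (x - t k) ≤ ∑ k ∈ Ico 1 n, μ k / (9 / 10 * t n) := by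
          refine sum_le_sum fun k hk => ?_
          obtain ⟨hk, hkn⟩ := mem_Ico.1 hk
          exact div_le_div_of_nonneg_left (h.μ_pos k hk (by omega)).le (by positivity)
            (h.le_sub_of_lt hx hnN hk hkn)
      _ = (∑ k ∈ Ico 1 n, μ k) / (9 / 10 * t n) := (sum_div ..).symm
      _ ≤ μ n / 9999 / (9 / 10 * t n) := by gcongr; exact h.sum_Ico_μ_le hn hnN.le
      _ ≤ μ n / t n := by
          rw [div_div, div_le_div_iff₀ (by positivity) htn]; nlinarith
  have hzero := hx.sum_Icc_eq_sum_Ioc hnN.le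
  rw [← sum_Ico_add_eq_sum_Icc hn] at hzero
  have hgrowth := h.μ_div_gap n hn hnN
  have hlow :
      ∑ k ∈ Ioc n N, μ k / (t k - x) - μ (n + 1) / t (n + 1) / 10 ≤ μ n / (x - t n) := by
    linarith
  calc (∑ k ∈ Ioc n N, μ k / (t k - x) - μ (n + 1) / t (n + 1) / 10) ^ 2
      ≤ (μ n / (x - t n)) ^ 2 := by
        refine pow_le_pow_left₀ ?_ hlow 2
        linarith [h.μ_div_le_sum_Ioc hx hn hnN, div_pos (h.μ_pos _ (by omega) hnN)
          (h.t_pos (k := n + 1) (by omega) hnN)]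
    _ = μ n * (μ n / (t n - x) ^ 2) := by rw [div_pow, sq (μ n), mul_div_assoc, sub_sq_comm]
    _ ≤ μ n * ∑ k ∈ Icc 1 N, μ k / (t k - x) ^ 2 := by
        gcongr; exact h.div_sq_le_sum_div_sq hn hnN.le x

theorem sum_Ioc_div_sq_le (hy : IsInterlacedZero N μ t m y) (hm : 1 ≤ m) (hmN : m < N) :
    ∑ k ∈ Ioc m N, μ k / (t k - y) ^ 2 ≤ 100 / 81 * (μ m / t m ^ 2 / 9) := by
  calc ∑ k ∈ Ioc m N, μ k / (t k - y) ^ 2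
      ≤ ∑ k ∈ Ioc m N, 100 / 81 * (μ k / t k ^ 2) := by
        refine sum_le_sum fun k hk => ?_
        obtain ⟨hmk, hkN⟩ := mem_Ioc.1 hk
        have htk := h.t_pos (k := k) (by omega) hkN
        have := h.le_sub_of_gt hy hm hmN hmk hkN
        calc μ k / (t k - y) ^ 2 ≤ μ k / (9 / 10 * t k) ^ 2 :=
              div_le_div_of_nonneg_left (h.μ_pos k (by omega) hkN).le (by positivity)
                (by gcongr)
          _ = 100 / 81 * (μ k / t k ^ 2) := by field_simp; ring
    _ = 100 / 81 * ∑ k ∈ Ioc m N, μ k / t k ^ 2 := (mul_sum ..).symm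
    _ ≤ 100 / 81 * (μ m / t m ^ 2 / 9) := by gcongr; exact h.sum_Ioc_μ_div_sq_le hm hmN.le

theorem mul_sum_sq_le (hy : IsInterlacedZero N μ t m y) (hm : 1 ≤ m) (hmN : m < N) :
    μ m * ∑ k ∈ Icc 1 N, μ k / (t k - y) ^ 2 ≤
      (∑ k ∈ Ioc m N, μ k / (t k - y)) ^ 2 + (μ m / t m) ^ 2 / 5 := by
  have htm := h.t_pos hm hmN.le
  have hμm := h.μ_pos m hm hmN.le
  have hnear : ∑ k ∈ Ico 1 m, μ k / (t k - y) ^ 2 ≤ 100 / 81 * (μ m / t m ^ 2) / 9999 := by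
    calc ∑ k ∈ Ico 1 m, μ k / (t k - y) ^ 2
        ≤ ∑ k ∈ Ico 1 m, μ k / (9 / 10 * t m) ^ 2 := by
          refine sum_le_sum fun k hk => ?_
          obtain ⟨hk, hkm⟩ := mem_Ico.1 hk
          have := h.le_sub_of_lt hy hmN hk hkm
          rw [sub_sq_comm]
          exact div_le_div_of_nonneg_left (h.μ_pos k hk (by omega)).le (by positivity)
            (by gcongr)
      _ = (∑ k ∈ Ico 1 m, μ k) / (9 / 10 * t m) ^ 2 := (sum_div ..).symm
      _ ≤ μ m / 9999 / (9 / 10 * t m) ^ 2 := by gcongr; exact h.sum_Ico_μ_le hm hmN.le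
      _ = 100 / 81 * (μ m / t m ^ 2) / 9999 := by field_simp; ring
  have hfar := h.sum_Ioc_div_sq_le hy hm hmN
  -- the pole term is controlled by the zero equation, all other terms are small
  have hpole : (μ m / (y - t m)) ^ 2 ≤ (∑ k ∈ Ioc m N, μ k / (t k - y)) ^ 2 := by
    refine pow_le_pow_left₀ (div_pos hμm (sub_pos.2 hy.lt)).le ?_ 2
    rw [← hy.sum_Icc_eq_sum_Ioc hmN.le]
    exact h.div_le_sum_Icc hy hm hmN
  have hpole' : μ m * (μ m / (t m - y) ^ 2) = (μ m / (y - t m)) ^ 2 := by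
    rw [div_pow, sq (μ m), mul_div_assoc, sub_sq_comm]
  have hg : (μ m / t m) ^ 2 = μ m * (μ m / t m ^ 2) := by ring
  have hg0 : 0 ≤ μ m * (μ m / t m ^ 2) := by positivity
  rw [sum_Icc_one_eq_sum_Icc_add_sum_Ioc _ hmN.le, ← sum_Ico_add_eq_sum_Icc hm]
  nlinarith [mul_le_mul_of_nonneg_left hnear hμm.le, mul_le_mul_of_nonneg_left hfar hμm.le]

theorem mul_sum_sq_lt (hx : IsInterlacedZero N μ t n x)
    (hy : IsInterlacedZero N μ t (n + 1) y) (hn : 1 ≤ n) (hnN : n + 1 < N) :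
    μ (n + 1) * ∑ k ∈ Icc 1 N, μ k / (t k - y) ^ 2 <
      μ n * ∑ k ∈ Icc 1 N, μ k / (t k - x) ^ 2 := by
  set P := ∑ k ∈ Ioc n N, μ k / (t k - x)
  set Q := ∑ k ∈ Ioc (n + 1) N, μ k / (t k - y)
  set g := μ (n + 1) / t (n + 1)
  have hg : 0 < g := div_pos (h.μ_pos _ (by omega) hnN.le) (h.t_pos (by omega) hnN.le)
  have hgP : g ≤ P := h.μ_div_le_sum_Ioc hx hn (by omega)
  have hQP : Q + 7 / 10 * g ≤ P := h.sum_Ioc_succ_add_le hx hy hn hnN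
  have hQ : Q ^ 2 ≤ (P - 7 / 10 * g) ^ 2 :=
    pow_le_pow_left₀ (h.sum_Ioc_div_nonneg hy (by omega)) (by linarith) 2
  calc μ (n + 1) * ∑ k ∈ Icc 1 N, μ k / (t k - y) ^ 2 ≤ Q ^ 2 + g ^ 2 / 5 :=
        h.mul_sum_sq_le hy (by omega) hnN
    _ < (P - g / 10) ^ 2 := by nlinarith
    _ ≤ μ n * ∑ k ∈ Icc 1 N, μ k / (t k - x) ^ 2 := h.sq_sub_le_mul_sum_sq hx hn (by omega)

end Lacunary

theorem stmt3_general (N n : ℕ) (lam kap th : ℝ) (μ t s w : ℕ → ℝ)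
    (hlam : 1000 < lam) (hkap : 10 < kap) (hth2 : th < 1 / 10)
    (ht : ∀ k ∈ Finset.Icc 1 (N - 1), lam * t k < t (k + 1) ∧ 0 < t k)
    (hμpos : ∀ k ∈ Finset.Icc 1 N, 0 < μ k)
    (hgrow : ∀ k ∈ Finset.Icc 1 (N - 1), kap * (t (k + 1) / t k) < μ (k + 1) / μ k)
    (hdec : ∀ k ∈ Finset.Icc 1 (N - 1), μ (k + 1) / t (k + 1) ^ 2 < th * (μ k / t k ^ 2))
    (hroot : ∀ m ∈ Finset.Icc 1 (N - 1), ∑ k ∈ Finset.Icc 1 N, μ k / (t k - s m) = 0)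
    (hint : ∀ m ∈ Finset.Icc 1 (N - 1), t m < s m ∧ s m < t (m + 1))
    (hw : ∀ m ∈ Finset.Icc 1 (N - 1),
      w m = (∑ k ∈ Finset.Icc 1 N, μ k / (t k - s m) ^ 2)⁻¹)
    (hn : 1 ≤ n) (hnN : n ≤ N - 2) :
    μ (n + 1) / μ n < w (n + 1) / w n := by
  have h := Lacunary.of_ratio_bounds (by omega) hlam hkap hth2 ht hμpos hgrow hdec
  have hzero : ∀ m ∈ Icc 1 (N - 1), IsInterlacedZero N μ t m (s m) := fun m hm =>
    ⟨(hint m hm).1, (hint m hm).2, hroot m hm⟩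
  have hn0 : n ∈ Icc 1 (N - 1) := mem_Icc.2 ⟨hn, by omega⟩
  have hn1 : n + 1 ∈ Icc 1 (N - 1) := mem_Icc.2 ⟨by omega, by omega⟩
  have hkey := h.mul_sum_sq_lt (hzero n hn0) (hzero (n + 1) hn1) hn (by omega)
  rw [hw n hn0, hw (n + 1) hn1, inv_div_inv, div_lt_div_iff₀ (h.μ_pos n hn (by omega))
    (h.sum_div_sq_pos (hzero (n + 1) hn1) (by omega) (by omega))]
  linarith

/-- Lower bound: the ratio of successive weights does not decrease
under one step of the Stieltjes algorithm. -/
theorem stmt3 (N n : ℕ) (lam kap th : ℝ) (μ t s w : ℕ → ℝ)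
    (hlam : 1000 < lam) (hkap : 10 < kap) (hth1 : 10 / lam < th) (hth2 : th < 1 / 10)
    (ht : ∀ k ∈ Finset.Icc 1 (N - 1), lam * t k < t (k + 1) ∧ 0 < t k)
    (hμpos : ∀ k ∈ Finset.Icc 1 N, 0 < μ k)
    (hgrow : ∀ k ∈ Finset.Icc 1 (N - 1), kap * (t (k + 1) / t k) < μ (k + 1) / μ k)
    (hdec : ∀ k ∈ Finset.Icc 1 (N - 1), μ (k + 1) / t (k + 1) ^ 2 < th * (μ k / t k ^ 2))
    (hroot : ∀ m ∈ Finset.Icc 1 (N - 1), ∑ k ∈ Finset.Icc 1 N, μ k / (t k - s m) = 0)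
    (hint : ∀ m ∈ Finset.Icc 1 (N - 1), t m < s m ∧ s m < t (m + 1))
    (hw : ∀ m ∈ Finset.Icc 1 (N - 1),
      w m = (∑ k ∈ Finset.Icc 1 N, μ k / (t k - s m) ^ 2)⁻¹)
    (hn : 1 ≤ n) (hnN : n ≤ N - 2) :
    μ (n + 1) / μ n < w (n + 1) / w n :=
  stmt3_general N n lam kap th μ t s w hlam hkap hth2 ht hμpos hgrow hdec hroot hint hw hn hnN
end

section
/- Let μ^{(k)} = Σ_n μ_n^{(k)} δ_{t_n^{(k)}} denote the spectral data after k steps of the Stieltjes algorithm (μ^{(0)} = μ). Suppose that for 0 ≤ k ≤ K one has μ_{n+1}^{(k)}/μ_n^{(k)} > κ̂ · t_{n+1}^{(k)}/t_n^{(k)} for some κ̂ > 5 and all admissible n. Then for each n, t_n^{(K+1)}/t_n^{(0)} < 1 + 2/κ̂. Moreover, at each step 0 ≤ p ≤ K one has t_n^{(p+1)}/t_n^{(p)} < 1 + (κ̂ - 1)^{-(N-p-n)}. -/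
/-!
Write `g i = f i / τ i` for the weights `f` and poles `τ` of one step, with atoms `1, …, M`;
the growth hypothesis says `κ * g i < g (i + 1)`. A new pole `s ∈ (τ m, τ (m + 1))` is a zero
of `∑ f i / (τ i - s)`, so
`f m / (s - τ m) = ∑_{i > m} f i / (τ i - s) - ∑_{i < m} f i / (s - τ i)`.
The first sum exceeds its last term `g M ≥ κ ^ (M - m) * g m`; lacunarity gives `s - τ i ≥ τ i`
for `i < m`, so the second sum is at most `∑_{i < m} g i ≤ g m / (κ - 1) ≤ g m`. Hence
`s - τ m < τ m / (κ - 1) ^ (M - m)`.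

Along the steps the exponents `N - p - n` decrease by one, and with `a = κ - 1 ≥ 4` the products
of the factors `1 + (a ^ e)⁻¹` stay below `1 + 3 / (2 a)`, because
`(1 + 3 / (2 a x)) (1 + 1 / x) ≤ 1 + 3 / (2 x)` for `x ≥ 4`; and `3 / (2 a) < 2 / (a + 1)`.
-/

open Finset

section Growth

variable {g : ℕ → ℝ} {c : ℝ} {m n : ℕ}

lemma pow_mul_le_of_mul_le_succ (hc : 0 ≤ c) (hmn : m ≤ n)
    (hg : ∀ i ∈ Ico m n, c * g i ≤ g (i + 1)) : c ^ (n - m) * g m ≤ g n := by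
  induction n, hmn using Nat.le_induction with
  | base => simp
  | succ n hmn ih =>
    have ih := ih fun i hi ↦ hg i (Ico_subset_Ico_right n.le_succ hi)
    calc c ^ (n + 1 - m) * g m = c * (c ^ (n - m) * g m) := by
          rw [Nat.sub_add_comm hmn, pow_succ', mul_assoc]
      _ ≤ c * g n := by gcongr
      _ ≤ g (n + 1) := hg n (by simp [hmn])

lemma sub_one_mul_sum_Ico_le_of_mul_le_succ (hmn : m ≤ n) (hm : 0 ≤ g m)
    (hg : ∀ i ∈ Ico m n, c * g i ≤ g (i + 1)) : (c - 1) * ∑ i ∈ Ico m n, g i ≤ g n := by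
  induction n, hmn using Nat.le_induction with
  | base => simpa using hm
  | succ n hmn ih =>
    have ih := ih fun i hi ↦ hg i (Ico_subset_Ico_right n.le_succ hi)
    rw [sum_Ico_succ_top hmn]
    linarith [hg n (by simp [hmn])]

end Growth

lemma one_add_three_div_mul_one_add_inv_le {a x : ℝ} (ha : 4 ≤ a) (hx : 4 ≤ x) :
    (1 + 3 / (2 * (a * x))) * (1 + x⁻¹) ≤ 1 + 3 / (2 * x) := by
  rw [← sub_nonneg]
  have key : 1 + 3 / (2 * x) - (1 + 3 / (2 * (a * x))) * (1 + x⁻¹)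
      = (a * x - 3 * x - 3) / (2 * a * x ^ 2) := by
    field_simp; ring
  rw [key]
  apply div_nonneg _ (by positivity)
  nlinarith

lemma le_one_add_three_div_pow_mul_of_le_one_add_inv_pow_mul {u : ℕ → ℝ} {a : ℝ} {e j : ℕ}
    (ha : 4 ≤ a) (hj : j ≤ e) (hu : 0 ≤ u 0)
    (hstep : ∀ p < j, u (p + 1) ≤ (1 + (a ^ (e - p))⁻¹) * u p) :
    u j ≤ (1 + 3 / (2 * a ^ (e + 1 - j))) * u 0 := by
  induction j with
  | zero =>
    have : 0 ≤ 3 / (2 * a ^ (e + 1)) * u 0 := by positivity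
    simp only [Nat.sub_zero]
    linarith
  | succ j ih =>
    set y := a ^ (e - j)
    have hy : 4 ≤ y := ha.trans (le_self_pow₀ (by linarith) (by omega))
    have ih := ih (by omega) fun p hp ↦ hstep p (by omega)
    calc u (j + 1) ≤ (1 + y⁻¹) * u j := hstep j j.lt_succ_self
      _ ≤ (1 + y⁻¹) * ((1 + 3 / (2 * (a * y))) * u 0) := by
          rw [show e + 1 - j = e - j + 1 by omega, pow_succ'] at ih
          gcongr
      _ ≤ (1 + 3 / (2 * y)) * u 0 := by
          rw [← mul_assoc, mul_comm (1 + y⁻¹)]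
          gcongr
          exact one_add_three_div_mul_one_add_inv_le ha hy
      _ = (1 + 3 / (2 * a ^ (e + 1 - (j + 1)))) * u 0 := by
          rw [show e + 1 - (j + 1) = e - j by omega]

lemma sum_Icc_eq_sum_Ico_add_add_sum_Ioc {β : Type*} [AddCommMonoid β] (h : ℕ → β)
    {a m b : ℕ} (ham : a ≤ m) (hmb : m ≤ b) :
    ∑ i ∈ Icc a b, h i = ∑ i ∈ Ico a m, h i + h m + ∑ i ∈ Ioc m b, h i := by
  rw [← Finset.Ico_add_one_right_eq_Icc, ← sum_Ico_consecutive h ham (by omega : m ≤ b + 1),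
    Finset.Ico_add_one_right_eq_Icc, Icc_eq_cons_Ioc hmb, sum_cons, add_assoc]

section StieltjesStep

variable {M m : ℕ} {κ lam s : ℝ} {f τ : ℕ → ℝ}

lemma strictMonoOn_Icc_of_lacunary (hlam : 1 ≤ lam) (hτ : ∀ i ∈ Icc 1 M, 0 < τ i)
    (hlac : ∀ i ∈ Icc 1 (M - 1), lam * τ i < τ (i + 1)) : StrictMonoOn τ (Set.Icc 1 M) := by
  refine strictMonoOn_of_lt_add_one Set.ordConnected_Icc fun i _ hi hi1 ↦ ?_
  rw [Set.mem_Icc] at hi hi1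
  have hτi := hτ i (mem_Icc.2 hi)
  nlinarith [hlac i (mem_Icc.2 ⟨hi.1, by omega⟩)]

lemma mul_div_le_div_succ (hf : ∀ i ∈ Icc 1 M, 0 < f i) (hτ : ∀ i ∈ Icc 1 M, 0 < τ i)
    (hgrow : ∀ i ∈ Icc 1 (M - 1), κ * (τ (i + 1) / τ i) < f (i + 1) / f i) :
    ∀ i ∈ Ico 1 M, κ * (f i / τ i) ≤ f (i + 1) / τ (i + 1) := by
  intro i hi
  rw [mem_Ico] at hi
  have hfi := hf i (mem_Icc.2 ⟨hi.1, hi.2.le⟩)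
  have hτi := hτ i (mem_Icc.2 ⟨hi.1, hi.2.le⟩)
  have hτi1 := hτ (i + 1) (mem_Icc.2 ⟨by omega, hi.2⟩)
  have h := hgrow i (mem_Icc.2 ⟨hi.1, by omega⟩)
  rw [lt_div_iff₀ hfi] at h
  rw [le_div_iff₀ hτi1]
  calc κ * (f i / τ i) * τ (i + 1) = κ * (τ (i + 1) / τ i) * f i := by field_simp
    _ ≤ f (i + 1) := h.le

lemma sum_Ico_div_sub_le_s5 (hκ : 2 ≤ κ) (hlam : 2 ≤ lam)
    (hf : ∀ i ∈ Icc 1 M, 0 < f i) (hτ : ∀ i ∈ Icc 1 M, 0 < τ i)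
    (hlac : ∀ i ∈ Icc 1 (M - 1), lam * τ i < τ (i + 1))
    (hgrow : ∀ i ∈ Icc 1 (M - 1), κ * (τ (i + 1) / τ i) < f (i + 1) / f i)
    (hm : m ∈ Icc 1 M) (hs : τ m < s) :
    ∑ i ∈ Ico 1 m, f i / (s - τ i) ≤ f m / τ m := by
  have hsub : Ico 1 m ⊆ Icc 1 M := fun i hi ↦ by
    simp only [mem_Ico, mem_Icc] at hi hm ⊢; omega
  have hmono := strictMonoOn_Icc_of_lacunary (by linarith) hτ hlac
  have hterm : ∀ i ∈ Ico 1 m, f i / (s - τ i) ≤ f i / τ i := by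
    intro i hi
    have hτi := hτ i (hsub hi)
    have hi1 : τ (i + 1) ≤ τ m := by
      rw [mem_Ico] at hi
      exact hmono.monotoneOn (by simp only [Set.mem_Icc, mem_Icc] at hm ⊢; omega)
        (mem_Icc.1 hm) (by omega)
    have := hlac i (by simp only [mem_Ico, mem_Icc] at hi hm ⊢; omega)
    exact div_le_div_of_nonneg_left (hf i (hsub hi)).le hτi (by nlinarith)
  have hnonneg : 0 ≤ ∑ i ∈ Ico 1 m, f i / τ i :=
    sum_nonneg fun i hi ↦ (div_pos (hf i (hsub hi)) (hτ i (hsub hi))).le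
  have hgeom : (κ - 1) * ∑ i ∈ Ico 1 m, f i / τ i ≤ f m / τ m := by
    rw [mem_Icc] at hm
    have h₁ : 1 ∈ Icc 1 M := mem_Icc.2 ⟨le_rfl, by omega⟩
    exact sub_one_mul_sum_Ico_le_of_mul_le_succ hm.1 (div_pos (hf 1 h₁) (hτ 1 h₁)).le
      fun i hi ↦ mul_div_le_div_succ hf hτ hgrow i (Ico_subset_Ico_right hm.2 hi)
  calc ∑ i ∈ Ico 1 m, f i / (s - τ i) ≤ ∑ i ∈ Ico 1 m, f i / τ i := sum_le_sum hterm
    _ ≤ f m / τ m := by nlinarith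

lemma pow_mul_div_lt_sum_Ioc (hκ : 0 ≤ κ) (hlam : 1 ≤ lam)
    (hf : ∀ i ∈ Icc 1 M, 0 < f i) (hτ : ∀ i ∈ Icc 1 M, 0 < τ i)
    (hlac : ∀ i ∈ Icc 1 (M - 1), lam * τ i < τ (i + 1))
    (hgrow : ∀ i ∈ Icc 1 (M - 1), κ * (τ (i + 1) / τ i) < f (i + 1) / f i)
    (hm : m ∈ Icc 1 (M - 1))
    (hs₀ : 0 < s) (hs : s < τ (m + 1)) :
    κ ^ (M - m) * (f m / τ m) < ∑ i ∈ Ioc m M, f i / (τ i - s) := by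
  rw [mem_Icc] at hm
  have hmono := strictMonoOn_Icc_of_lacunary hlam hτ hlac
  have hfM := hf M (mem_Icc.2 ⟨by omega, le_rfl⟩)
  have hτM := hτ M (mem_Icc.2 ⟨by omega, le_rfl⟩)
  have hsτ : ∀ i ∈ Ioc m M, s < τ i := fun i hi ↦ by
    rw [mem_Ioc] at hi
    exact hs.trans_le (hmono.monotoneOn ⟨by omega, by omega⟩ ⟨by omega, hi.2⟩ hi.1)
  have hsM := hsτ M (mem_Ioc.2 ⟨by omega, le_rfl⟩)
  calc κ ^ (M - m) * (f m / τ m) ≤ f M / τ M :=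
        pow_mul_le_of_mul_le_succ hκ (by omega) fun i hi ↦
          mul_div_le_div_succ hf hτ hgrow i (Ico_subset_Ico_left hm.1 hi)
    _ < f M / (τ M - s) := div_lt_div_of_pos_left hfM (by linarith) (by linarith)
    _ ≤ ∑ i ∈ Ioc m M, f i / (τ i - s) := by
        refine single_le_sum (f := fun i ↦ f i / (τ i - s)) (fun i hi ↦ ?_)
          (mem_Ioc.2 ⟨by omega, le_rfl⟩)
        have := hsτ i hi
        rw [mem_Ioc] at hi
        exact div_nonneg (hf i (mem_Icc.2 ⟨by omega, hi.2⟩)).le (by linarith)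

lemma div_lt_one_add_inv_pow_of_sum_div_sub_eq_zero (hκ : 2 ≤ κ) (hlam : 2 ≤ lam)
    (hf : ∀ i ∈ Icc 1 M, 0 < f i) (hτ : ∀ i ∈ Icc 1 M, 0 < τ i)
    (hlac : ∀ i ∈ Icc 1 (M - 1), lam * τ i < τ (i + 1))
    (hgrow : ∀ i ∈ Icc 1 (M - 1), κ * (τ (i + 1) / τ i) < f (i + 1) / f i)
    (hm : m ∈ Icc 1 (M - 1)) (hs : τ m < s ∧ s < τ (m + 1))
    (hroot : ∑ i ∈ Icc 1 M, f i / (τ i - s) = 0) :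
    s / τ m < 1 + ((κ - 1) ^ (M - m))⁻¹ := by
  have hm' : m ∈ Icc 1 M := Icc_subset_Icc_right (Nat.sub_le M 1) hm
  have hfm := hf m hm'
  have hτm := hτ m hm'
  have hsplit : f m / (s - τ m)
      = ∑ i ∈ Ioc m M, f i / (τ i - s) - ∑ i ∈ Ico 1 m, f i / (s - τ i) := by
    obtain ⟨hm₁, hm₂⟩ := mem_Icc.1 hm'
    rw [sum_Icc_eq_sum_Ico_add_add_sum_Ioc _ hm₁ hm₂] at hroot
    have hneg : ∀ i, f i / (τ i - s) = -(f i / (s - τ i)) := fun i ↦ by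
      rw [← div_neg, neg_sub]
    simp only [hneg, sum_neg_distrib] at hroot ⊢
    linarith
  have hlower := sum_Ico_div_sub_le_s5 hκ hlam hf hτ hlac hgrow hm' hs.1
  have hupper := pow_mul_div_lt_sum_Ioc (by linarith) (by linarith) hf hτ hlac hgrow hm
    (hτm.trans hs.1) hs.2
  have hpow : (κ - 1) ^ (M - m) + 1 ≤ κ ^ (M - m) := by
    simpa using pow_add_pow_le (by linarith : 0 ≤ κ - 1) zero_le_one
      (by simp only [mem_Icc] at hm; omega : M - m ≠ 0)
  have hpos : 0 < (κ - 1) ^ (M - m) := pow_pos (by linarith) _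
  have key : (κ - 1) ^ (M - m) * (s - τ m) < τ m := by
    have h : (κ - 1) ^ (M - m) * (f m / τ m) < f m / (s - τ m) := by
      nlinarith [div_pos hfm hτm]
    rw [mul_div_assoc', div_lt_div_iff₀ hτm (by linarith)] at h
    exact lt_of_mul_lt_mul_left (by linarith) hfm.le
  have : s - τ m < τ m / (κ - 1) ^ (M - m) := by
    rw [lt_div_iff₀ hpos]
    linarith
  rw [div_lt_iff₀ hτm, add_mul, one_mul, inv_mul_eq_div]
  linarith

end StieltjesStep

theorem stmt5_general (N K : ℕ) (lam kaph : ℝ)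
    (μ t : ℕ → ℕ → ℝ)
    (hkaph : 5 < kaph) (hlam : 1000 < lam)
    (hpos : ∀ k ≤ K + 1, ∀ n ∈ Finset.Icc 1 (N - k), 0 < μ k n)
    (htpos : ∀ k ≤ K + 1, ∀ n ∈ Finset.Icc 1 (N - k), 0 < t k n)
    (hlac : ∀ k ≤ K + 1, ∀ n ∈ Finset.Icc 1 (N - k - 1), lam * t k n < t k (n + 1))
    (hroot : ∀ k ≤ K, ∀ m ∈ Finset.Icc 1 (N - k - 1),
      ∑ n ∈ Finset.Icc 1 (N - k), μ k n / (t k n - t (k + 1) m) = 0)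
    (hint : ∀ k ≤ K, ∀ m ∈ Finset.Icc 1 (N - k - 1),
      t k m < t (k + 1) m ∧ t (k + 1) m < t k (m + 1))
    (hgrow : ∀ k ≤ K, ∀ n ∈ Finset.Icc 1 (N - k - 1),
      kaph * (t k (n + 1) / t k n) < μ k (n + 1) / μ k n) :
    (∀ n ∈ Finset.Icc 1 (N - (K + 1)), t (K + 1) n / t 0 n < 1 + 2 / kaph) ∧
    (∀ p ≤ K, ∀ n ∈ Finset.Icc 1 (N - p - 1),
      t (p + 1) n / t p n < 1 + (kaph - 1) ^ (-(((N : ℤ) - (p : ℤ) - (n : ℤ))))) := by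
  have hstep : ∀ p ≤ K, ∀ n ∈ Icc 1 (N - p - 1),
      t (p + 1) n / t p n < 1 + ((kaph - 1) ^ (N - p - n))⁻¹ := fun p hp n hn ↦
    div_lt_one_add_inv_pow_of_sum_div_sub_eq_zero (by linarith) (by linarith)
      (hpos p (by omega)) (htpos p (by omega)) (hlac p (by omega)) (hgrow p hp) hn (hint p hp n hn)
      (hroot p hp n hn)
  refine ⟨fun n hn ↦ ?_, fun p hp n hn ↦ ?_⟩
  · rw [mem_Icc] at hn
    have ht0 := htpos 0 (by omega) n (mem_Icc.2 ⟨hn.1, by omega⟩)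
    have hacc := le_one_add_three_div_pow_mul_of_le_one_add_inv_pow_mul (u := fun p ↦ t p n)
      (e := N - n) (j := K + 1) (by linarith : 4 ≤ kaph - 1) (by omega) ht0.le fun p hp ↦ by
        have h := hstep p (by omega) n (mem_Icc.2 ⟨hn.1, by omega⟩)
        rw [div_lt_iff₀ (htpos p (by omega) n (mem_Icc.2 ⟨hn.1, by omega⟩))] at h
        rw [show N - n - p = N - p - n by omega]
        exact h.le
    have hexp : kaph - 1 ≤ (kaph - 1) ^ (N - n + 1 - (K + 1)) :=
      le_self_pow₀ (by linarith) (by omega)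
    have hconst : 3 / (2 * (kaph - 1)) < 2 / kaph := by
      rw [div_lt_div_iff₀ (by linarith) (by linarith)]
      linarith
    rw [div_lt_iff₀ ht0]
    calc t (K + 1) n ≤ (1 + 3 / (2 * (kaph - 1) ^ (N - n + 1 - (K + 1)))) * t 0 n := hacc
      _ ≤ (1 + 3 / (2 * (kaph - 1))) * t 0 n := by gcongr; linarith
      _ < (1 + 2 / kaph) * t 0 n := by gcongr
  · have hn' := mem_Icc.1 hn
    rw [show -((N : ℤ) - p - n) = -((N - p - n : ℕ) : ℤ) by omega, zpow_neg, zpow_natCast]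
    exact hstep p hp n hn

/-- If on the first `K` steps of the Stieltjes algorithm the weights grow fast enough,
then even after the `K+1`-st step the poles change little.  Here `μ k n` and `t k n`
denote the weights and poles of the spectral data `μ^{(k)}` after `k` Stieltjes steps,
with `μ^{(0)} = μ` and `μ^{(k)}` having atoms indexed by `1 ≤ n ≤ N - k`. -/
theorem stmt5 (N K : ℕ) (hN : K + 2 ≤ N) (lam kaph : ℝ)
    (μ t : ℕ → ℕ → ℝ)
    (hkaph : 5 < kaph) (hlam : 1000 < lam)
    (hpos : ∀ k ≤ K + 1, ∀ n ∈ Finset.Icc 1 (N - k), 0 < μ k n)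
    (hnorm : ∀ k ≤ K + 1, ∑ n ∈ Finset.Icc 1 (N - k), μ k n = 1)
    (htpos : ∀ k ≤ K + 1, ∀ n ∈ Finset.Icc 1 (N - k), 0 < t k n)
    (hlac : ∀ k ≤ K + 1, ∀ n ∈ Finset.Icc 1 (N - k - 1), lam * t k n < t k (n + 1))
    (hroot : ∀ k ≤ K, ∀ m ∈ Finset.Icc 1 (N - k - 1),
      ∑ n ∈ Finset.Icc 1 (N - k), μ k n / (t k n - t (k + 1) m) = 0)
    (hint : ∀ k ≤ K, ∀ m ∈ Finset.Icc 1 (N - k - 1),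
      t k m < t (k + 1) m ∧ t (k + 1) m < t k (m + 1))
    (hweights : ∀ k ≤ K, ∃ c : ℝ, 0 < c ∧ ∀ m ∈ Finset.Icc 1 (N - k - 1),
      μ (k + 1) m = c * (∑ n ∈ Finset.Icc 1 (N - k), μ k n / (t k n - t (k + 1) m) ^ 2)⁻¹)
    (hgrow : ∀ k ≤ K, ∀ n ∈ Finset.Icc 1 (N - k - 1),
      kaph * (t k (n + 1) / t k n) < μ k (n + 1) / μ k n) :
    (∀ n ∈ Finset.Icc 1 (N - (K + 1)), t (K + 1) n / t 0 n < 1 + 2 / kaph) ∧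
    (∀ p ≤ K, ∀ n ∈ Finset.Icc 1 (N - p - 1),
      t (p + 1) n / t p n < 1 + (kaph - 1) ^ (-(((N : ℤ) - (p : ℤ) - (n : ℤ))))) :=
  stmt5_general N K lam kaph μ t hkaph hlam hpos htpos hlac hroot hint hgrow
end

section
/- Under the reversed-Stieltjes-step hypotheses (b > λ s_{N-1}, s_{n+1} > λ s_n, λ > 1000; w_{n+1}/w_n > κ s_{n+1}/s_n, κ > 10; w_{n+1}/s_{n+1}^2 < θ w_n/s_n^2, θ < 1/10; 10θ^{-1} s_{N-1}^2 < Σ w_k < (1/10)κ^{-1} b s_{N-1}), the new weights μ_n = (1 + Σ_k w_k/(s_k - t_n)^2)^{-1} satisfy (1 + ε_n)^2 μ_{n+1}/μ_n > w_{n+1}/w_n for n < N-1 with ε_n = κ^{n-N+1}, and μ_N/μ_{N-1} > κ t_N/t_{N-1}. -/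
/-!
For `m < N` the root `t m` lies just below the pole `s m`, and the growth conditions make the
`m`-th term dominate the secular equation `F (t m) = 0`: `B m := w m / (s m - t m) ≥ 9 b / 10`,
while the other poles contribute less than `b / 45`. Hence `w m / μ m = w m * F' (t m)` is
essentially `B m ^ 2`. Apart from its `n`-th and `(n + 1)`-th terms, `F` is increasing between
`t n` and `t (n + 1)`, which gives `B (n + 1) ≤ B n + 2 ε_n b / 5`; the remaining contributions
to `w (n + 1) / μ (n + 1)` are `O(ε_n b ^ 2)` since `w (n + 1) / s (n + 1) < ε_n b / 10`.
For the last root, `b ≤ t N ≤ (1 + 10⁻⁴) b` and `F' (t N) ≤ 1 + 10⁻⁴`, whereas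
`t (N - 1) F' (t (N - 1)) > 3 κ b`.
-/

open Finset

theorem div_sub_le_div_sub {w s x y : ℝ} (hw : 0 ≤ w) (hxy : x ≤ y) (hs : s < x ∨ y < s) :
    w / (s - x) ≤ w / (s - y) := by
  rcases hs with hs | hs
  · rw [← neg_sub x s, ← neg_sub y s, div_neg, div_neg, neg_le_neg_iff]
    exact div_le_div_of_nonneg_left hw (sub_pos.2 hs) (sub_le_sub_right hxy s)
  · exact div_le_div_of_nonneg_left hw (sub_pos.2 hs) (sub_le_sub_left hxy s)

theorem sum_div_sub_le_sum_div_sub {ι : Type*} {S : Finset ι} {w s : ι → ℝ} {x y : ℝ}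
    (hxy : x ≤ y) (h : ∀ k ∈ S, 0 ≤ w k ∧ (s k < x ∨ y < s k)) :
    ∑ k ∈ S, w k / (s k - x) ≤ ∑ k ∈ S, w k / (s k - y) :=
  sum_le_sum fun k hk => div_sub_le_div_sub (h k hk).1 hxy (h k hk).2

theorem div_sq_le_div_sq {w d c : ℝ} (hw : 0 ≤ w) (hc : 0 < c) (hcd : c ≤ |d|) :
    w / d ^ 2 ≤ w / c ^ 2 :=
  div_le_div_of_nonneg_left hw (by positivity) (by
    rw [← sq_abs d]; exact pow_le_pow_left₀ hc.le hcd 2)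

theorem pow_sub_mul_le_of_mul_le_succ {f : ℕ → ℝ} {r : ℝ} {a c : ℕ} (hr : 0 ≤ r) (hac : a ≤ c)
    (h : ∀ k ∈ Ico a c, r * f k ≤ f (k + 1)) : r ^ (c - a) * f a ≤ f c := by
  induction c, hac using Nat.le_induction with
  | base => simp
  | succ c hac ih =>
    rw [Nat.sub_add_comm hac, pow_succ', mul_assoc]
    calc r * (r ^ (c - a) * f a) ≤ r * f c :=
          mul_le_mul_of_nonneg_left (ih fun k hk => h k (by simp at hk ⊢; omega)) hr
      _ ≤ f (c + 1) := h c (by simp; omega)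

theorem sum_Ico_le_of_mul_le_succ {f : ℕ → ℝ} {r : ℝ} {a c : ℕ} (hac : a ≤ c)
    (h : ∀ k ∈ Ico a c, r * f k ≤ f (k + 1)) :
    (r - 1) * ∑ k ∈ Ico a c, f k ≤ f c - f a := by
  induction c, hac using Nat.le_induction with
  | base => simp
  | succ c hac ih =>
    have hc := h c (by simp; omega)
    have ih := ih fun k hk => h k (by simp at hk ⊢; omega)
    rw [sum_Ico_succ_top hac]
    linear_combination ih + hc

theorem sum_Ioc_le_of_mul_succ_le {f : ℕ → ℝ} {r : ℝ} {a c : ℕ} (hac : a ≤ c)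
    (h : ∀ k ∈ Ico a c, r * f (k + 1) ≤ f k) :
    (r - 1) * ∑ k ∈ Ioc a c, f k ≤ f a - f c := by
  induction c, hac using Nat.le_induction with
  | base => simp
  | succ c hac ih =>
    have hc := h c (by simp; omega)
    have ih := ih fun k hk => h k (by simp at hk ⊢; omega)
    rw [sum_Ioc_succ_top hac]
    linear_combination ih + hc

theorem sum_Icc_eq_sum_Ico_add_add_sum_Ioc_s11 {M : Type*} [AddCommMonoid M] (f : ℕ → M) {m K : ℕ}
    (hm : m ∈ Icc 1 K) :
    ∑ k ∈ Icc 1 K, f k = ∑ k ∈ Ico 1 m, f k + f m + ∑ k ∈ Ioc m K, f k := by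
  obtain ⟨hm1, hmK⟩ := mem_Icc.1 hm
  rw [← Ico_add_one_right_eq_Icc, ← sum_Ico_consecutive f hm1 (by omega : m ≤ K + 1),
    sum_eq_sum_Ico_succ_bot (by omega : m < K + 1), Ico_add_one_add_one_eq_Ioc, add_assoc]

theorem add_sq_lt_one_add_sq_mul_sq {ε b B B' r : ℝ} (hε : 0 < ε) (hε1 : ε ≤ 1 / 10) (hb : 0 < b)
    (hB : 9 / 10 * b ≤ B) (hB' : 0 ≤ B') (hBB : B' ≤ B + 2 / 5 * (ε * b))
    (hr : r ≤ ε * b ^ 2 / 500) : r + B' ^ 2 < (1 + ε) ^ 2 * B ^ 2 := by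
  have hsq : B' ^ 2 ≤ (B + 2 / 5 * (ε * b)) ^ 2 := pow_le_pow_left₀ hB' hBB 2
  have hbB : b ≤ 10 / 9 * B := by linarith
  have hεB : 0 ≤ ε * B := by nlinarith
  have h1 : ε * b * B ≤ 10 / 9 * (ε * B ^ 2) := by
    nlinarith [mul_le_mul_of_nonneg_left hbB hεB]
  have h2 : ε * b ^ 2 ≤ 100 / 81 * (ε * B ^ 2) := by
    nlinarith [mul_le_mul_of_nonneg_left hbB (mul_nonneg hε.le hb.le)]
  have h3 : ε ^ 2 * b ^ 2 ≤ 1 / 10 * (ε * b ^ 2) := by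
    nlinarith [mul_le_mul_of_nonneg_right hε1 (mul_nonneg hε.le (sq_nonneg b))]
  nlinarith [mul_pos hε (mul_pos hb hb), sq_nonneg (ε * B)]

noncomputable def secular (K : ℕ) (b : ℝ) (w s : ℕ → ℝ) (x : ℝ) : ℝ :=
  x - b + ∑ k ∈ Icc 1 K, w k / (s k - x)

/-- The derivative `F'` of `secular`, so that `μ n = (F' (t n))⁻¹` is the residue of `-1 / F`
at its root `t n`. -/
noncomputable def secularDeriv (K : ℕ) (w s : ℕ → ℝ) (x : ℝ) : ℝ :=
  1 + ∑ k ∈ Icc 1 K, w k / (s k - x) ^ 2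

section

variable {K m : ℕ} {b x y : ℝ} {w s : ℕ → ℝ}

theorem secular_eq_add_sum_Ico_add_sum_Ioc (hm : m ∈ Icc 1 K) :
    secular K b w s x = x - b + w m / (s m - x) +
      (∑ k ∈ Ico 1 m, w k / (s k - x) + ∑ k ∈ Ioc m K, w k / (s k - x)) := by
  rw [secular, sum_Icc_eq_sum_Ico_add_add_sum_Ioc_s11 _ hm]; ring

theorem secular_le_secular (hxy : x ≤ y) (h : ∀ k ∈ Icc 1 K, 0 ≤ w k ∧ (s k < x ∨ y < s k)) :
    secular K b w s x ≤ secular K b w s y := by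
  unfold secular
  linarith [sum_div_sub_le_sum_div_sub hxy h]

theorem add_sq_div_le_mul_secularDeriv (hw : ∀ k ∈ Icc 1 K, 0 ≤ w k) (hm : m ∈ Icc 1 K) :
    w m + (w m / (s m - x)) ^ 2 ≤ w m * secularDeriv K w s x := by
  have h := single_le_sum (f := fun k => w k / (s k - x) ^ 2)
    (fun k hk => div_nonneg (hw k hk) (sq_nonneg _)) hm
  have e : (w m / (s m - x)) ^ 2 = w m * (w m / (s m - x) ^ 2) := by rw [div_pow]; ring
  rw [secularDeriv, mul_add, mul_one, e]
  linarith [mul_le_mul_of_nonneg_left h (hw m hm)]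

theorem one_le_secularDeriv (hw : ∀ k ∈ Icc 1 K, 0 ≤ w k) : 1 ≤ secularDeriv K w s x :=
  le_add_of_nonneg_right (sum_nonneg fun k hk => div_nonneg (hw k hk) (sq_nonneg _))

end

structure IsInterlacingRoots (K : ℕ) (b : ℝ) (w s t : ℕ → ℝ) : Prop where
  secular_eq_zero : ∀ m ∈ Icc 1 (K + 1), secular K b w s (t m) = 0
  interlace : ∀ m ∈ Icc 1 K, t m < s m ∧ s m < t (m + 1)

/-- `K = N - 1` is the number of poles `s k` and weights `w k`, indexed by `k ∈ [1, K]`. -/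
structure IsReversedStieltjesStep (K : ℕ) (lam kap th b : ℝ) (w s : ℕ → ℝ) : Prop where
  lam_gt : 1000 < lam
  kap_gt : 10 < kap
  th_lt : th < 1 / 10
  w_pos : ∀ k ∈ Icc 1 K, 0 < w k
  s_one_pos : 0 < s 1
  s_gap : ∀ k ∈ Ico 1 K, lam * s k < s (k + 1)
  b_gap : lam * s K < b
  w_growth : ∀ k ∈ Ico 1 K, kap * (s (k + 1) / s k) < w (k + 1) / w k
  w_decay : ∀ k ∈ Ico 1 K, w (k + 1) / s (k + 1) ^ 2 < th * (w k / s k ^ 2)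
  sum_w_lt : ∑ k ∈ Icc 1 K, w k < 1 / 10 * kap⁻¹ * (b * s K)

namespace IsReversedStieltjesStep

variable {K m n : ℕ} {lam kap th b : ℝ} {w s t : ℕ → ℝ}

theorem s_pos (H : IsReversedStieltjesStep K lam kap th b w s) (hk : m ∈ Icc 1 K) : 0 < s m := by
  obtain ⟨hm1, hmK⟩ := mem_Icc.1 hk
  clear hk
  induction m, hm1 using Nat.le_induction with
  | base => exact H.s_one_pos
  | succ m hm1 ih =>
    exact (mul_pos (by linarith [H.lam_gt]) (ih (by omega))).trans
      (H.s_gap m (mem_Ico.2 ⟨hm1, hmK⟩))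

theorem thousand_mul_s_lt_succ (H : IsReversedStieltjesStep K lam kap th b w s) (hm : m ∈ Ico 1 K) :
    1000 * s m < s (m + 1) := by
  have hs := H.s_pos (Ico_subset_Icc_self hm)
  nlinarith [H.s_gap m hm, H.lam_gt]

theorem thousand_mul_s_lt (H : IsReversedStieltjesStep K lam kap th b w s) (hm : 1 ≤ m)
    (hmn : m < n) (hn : n ≤ K) : 1000 * s m < s n := by
  induction n, hmn using Nat.le_induction with
  | base => exact H.thousand_mul_s_lt_succ (mem_Ico.2 ⟨hm, hn⟩)
  | succ n hmn ih =>
    have hsn := H.s_pos (mem_Icc.2 ⟨by omega, (by omega : n ≤ K)⟩)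
    linarith [ih (by omega), H.thousand_mul_s_lt_succ (mem_Ico.2 ⟨(by omega : 1 ≤ n), hn⟩)]

theorem s_le (H : IsReversedStieltjesStep K lam kap th b w s) (hm : 1 ≤ m) (hmn : m ≤ n)
    (hn : n ≤ K) : s m ≤ s n := by
  rcases hmn.eq_or_lt with rfl | hlt
  · rfl
  · linarith [H.thousand_mul_s_lt hm hlt hn, H.s_pos (mem_Icc.2 ⟨hm, hlt.le.trans hn⟩)]

theorem thousand_mul_s_lt_b (H : IsReversedStieltjesStep K lam kap th b w s) (hm : m ∈ Icc 1 K) :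
    1000 * s m < b := by
  obtain ⟨hm1, hmK⟩ := mem_Icc.1 hm
  have hK := H.s_pos (mem_Icc.2 ⟨hm1.trans hmK, le_rfl⟩)
  nlinarith [H.s_le hm1 hmK le_rfl, H.b_gap, H.lam_gt]

theorem mul_w_div_s_lt (H : IsReversedStieltjesStep K lam kap th b w s) (hm : m ∈ Ico 1 K) :
    kap * (w m / s m) < w (m + 1) / s (m + 1) := by
  have hs := H.s_pos (Ico_subset_Icc_self hm)
  have hs' := H.s_pos (show m + 1 ∈ Icc 1 K by simp at hm ⊢; omega)
  have hw := H.w_pos m (Ico_subset_Icc_self hm)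
  have h := H.w_growth m hm
  rw [mul_div_assoc', div_lt_div_iff₀ hs hw] at h
  rw [mul_div_assoc', div_lt_div_iff₀ hs hs']
  linarith

theorem ten_mul_w_lt (H : IsReversedStieltjesStep K lam kap th b w s) (hm : m ∈ Ico 1 K) :
    10 * w m < w (m + 1) := by
  have hs := H.s_pos (Ico_subset_Icc_self hm)
  have hw := H.w_pos m (Ico_subset_Icc_self hm)
  have h := H.w_growth m hm
  rw [mul_div_assoc', div_lt_div_iff₀ hs hw] at h
  have hgap : 10 * s m < kap * s (m + 1) := by nlinarith [H.thousand_mul_s_lt_succ hm, H.kap_gt]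
  have : 10 * w m * s m < w (m + 1) * s m := by nlinarith [mul_lt_mul_of_pos_right hgap hw]
  exact lt_of_mul_lt_mul_right this hs.le

theorem ten_mul_w_div_sq_le (H : IsReversedStieltjesStep K lam kap th b w s) (hm : m ∈ Ico 1 K) :
    10 * (w (m + 1) / s (m + 1) ^ 2) ≤ w m / s m ^ 2 := by
  have hq : 0 ≤ w m / s m ^ 2 := div_nonneg (H.w_pos m (Ico_subset_Icc_self hm)).le (sq_nonneg _)
  linarith [H.w_decay m hm, mul_le_mul_of_nonneg_right H.th_lt.le hq]

theorem ten_mul_kap_mul_sum_w_lt (H : IsReversedStieltjesStep K lam kap th b w s) :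
    10 * kap * ∑ k ∈ Icc 1 K, w k < b * s K := by
  have hkap : 0 < kap := by linarith [H.kap_gt]
  have h := H.sum_w_lt
  rw [show 1 / 10 * kap⁻¹ * (b * s K) = b * s K / (10 * kap) by field_simp,
    lt_div_iff₀ (by positivity)] at h
  linarith

theorem ten_mul_kap_mul_w_lt (H : IsReversedStieltjesStep K lam kap th b w s) (hK : 1 ≤ K) :
    10 * kap * w K < b * s K :=
  (mul_le_mul_of_nonneg_left
    (single_le_sum (fun k hk => (H.w_pos k hk).le) (mem_Icc.2 ⟨hK, le_rfl⟩))
    (by linarith [H.kap_gt])).trans_lt H.ten_mul_kap_mul_sum_w_lt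

theorem pow_mul_w_lt (H : IsReversedStieltjesStep K lam kap th b w s) (hm : m ∈ Icc 1 K) :
    10 * kap ^ (K - m + 1) * w m < b * s m := by
  obtain ⟨hm1, hmK⟩ := mem_Icc.1 hm
  have hkap : 0 < kap := by linarith [H.kap_gt]
  have hsm := H.s_pos hm
  have hsK := H.s_pos (mem_Icc.2 ⟨hm1.trans hmK, le_rfl⟩)
  have hchain : kap ^ (K - m) * (w m / s m) ≤ w K / s K :=
    pow_sub_mul_le_of_mul_le_succ hkap.le hmK fun k hk =>
      (H.mul_w_div_s_lt (Ico_subset_Ico_left hm1 hk)).le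
  have hlast : 10 * kap * (w K / s K) < b := by
    rw [mul_div_assoc', div_lt_iff₀ hsK]; exact H.ten_mul_kap_mul_w_lt (hm1.trans hmK)
  calc 10 * kap ^ (K - m + 1) * w m = 10 * kap * (kap ^ (K - m) * (w m / s m)) * s m := by
        field_simp; ring
    _ ≤ 10 * kap * (w K / s K) * s m := by gcongr
    _ < b * s m := by gcongr

theorem hundred_mul_w_lt (H : IsReversedStieltjesStep K lam kap th b w s) (hm : m ∈ Icc 1 K) :
    100 * w m < b * s m := by
  have hkap : kap ≤ kap ^ (K - m + 1) := le_self_pow₀ (by linarith [H.kap_gt]) (by omega)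
  nlinarith [H.pow_mul_w_lt hm, H.w_pos m hm, H.kap_gt]

theorem nine_mul_sum_Ico_w_le (H : IsReversedStieltjesStep K lam kap th b w s)
    (hm : m ∈ Icc 1 K) : 9 * ∑ k ∈ Ico 1 m, w k ≤ w m := by
  obtain ⟨hm1, hmK⟩ := mem_Icc.1 hm
  have h := sum_Ico_le_of_mul_le_succ (r := 10) hm1 fun k hk =>
    (H.ten_mul_w_lt (Ico_subset_Ico_right hmK hk)).le
  linarith [H.w_pos 1 (mem_Icc.2 ⟨le_rfl, hm1.trans hmK⟩)]

theorem nine_mul_sum_Ioc_w_div_sq_le (H : IsReversedStieltjesStep K lam kap th b w s)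
    (hm : m ∈ Icc 1 K) : 9 * ∑ k ∈ Ioc m K, w k / s k ^ 2 ≤ w m / s m ^ 2 := by
  obtain ⟨hm1, hmK⟩ := mem_Icc.1 hm
  have h := sum_Ioc_le_of_mul_succ_le (f := fun k => w k / s k ^ 2) (r := 10) hmK fun k hk =>
    H.ten_mul_w_div_sq_le (Ico_subset_Ico_left hm1 hk)
  have hK := (H.w_pos K (mem_Icc.2 ⟨hm1.trans hmK, le_rfl⟩)).le
  linarith [div_nonneg hK (sq_nonneg (s K))]

theorem sum_w_div_s_lt (H : IsReversedStieltjesStep K lam kap th b w s) (hK : 1 ≤ K) :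
    ∑ k ∈ Icc 1 K, w k / s k < b / 90 := by
  have hsK := H.s_pos (mem_Icc.2 ⟨hK, le_rfl⟩)
  have h := sum_Ico_le_of_mul_le_succ (f := fun k => w k / s k) (r := 10) hK fun k hk => by
    have hq := div_nonneg (H.w_pos k (Ico_subset_Icc_self hk)).le
      (H.s_pos (Ico_subset_Icc_self hk)).le
    nlinarith [H.mul_w_div_s_lt hk, H.kap_gt]
  have h1I : 1 ∈ Icc 1 K := mem_Icc.2 ⟨le_rfl, hK⟩
  have h1 := div_nonneg (H.w_pos 1 h1I).le (H.s_pos h1I).le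
  have hlast : 100 * (w K / s K) < b := by
    rw [mul_div_assoc', div_lt_iff₀ hsK]
    nlinarith [H.ten_mul_kap_mul_w_lt hK, H.kap_gt, H.w_pos K (mem_Icc.2 ⟨hK, le_rfl⟩)]
  rw [← Ico_add_one_right_eq_Icc, sum_Ico_succ_top hK]
  linarith

theorem sum_Ico_add_sum_Ioc_div_sub_lt (H : IsReversedStieltjesStep K lam kap th b w s)
    (hm : m ∈ Icc 1 K) {x : ℝ} (hlow : ∀ k ∈ Ico 1 m, s k ≤ x)
    (hhigh : ∀ k ∈ Ioc m K, 2 * x ≤ s k) :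
    ∑ k ∈ Ico 1 m, w k / (s k - x) + ∑ k ∈ Ioc m K, w k / (s k - x) < b / 45 := by
  obtain ⟨hm1, hmK⟩ := mem_Icc.1 hm
  have hIco : ∀ k ∈ Ico 1 m, k ∈ Icc 1 K := fun k hk => by simp at hk ⊢; omega
  have hIoc : Ioc m K ⊆ Icc 1 K := fun k hk => by simp at hk ⊢; omega
  have hlow' : ∑ k ∈ Ico 1 m, w k / (s k - x) ≤ 0 := sum_nonpos fun k hk =>
    div_nonpos_of_nonneg_of_nonpos (H.w_pos k (hIco k hk)).le (sub_nonpos.2 (hlow k hk))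
  have hhigh' : ∑ k ∈ Ioc m K, w k / (s k - x) ≤ ∑ k ∈ Ioc m K, 2 * (w k / s k) :=
    sum_le_sum fun k hk => by
      have hs := H.s_pos (hIoc hk)
      calc w k / (s k - x) ≤ w k / (s k / 2) :=
            div_le_div_of_nonneg_left (H.w_pos k (hIoc hk)).le (by positivity)
              (by linarith [hhigh k hk])
        _ = 2 * (w k / s k) := by field_simp
  have hsub : ∑ k ∈ Ioc m K, w k / s k ≤ ∑ k ∈ Icc 1 K, w k / s k :=
    sum_le_sum_of_subset_of_nonneg hIoc fun k hk _ =>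
      div_nonneg (H.w_pos k hk).le (H.s_pos hk).le
  rw [← mul_sum] at hhigh'
  linarith [H.sum_w_div_s_lt (hm1.trans hmK)]

theorem s_lt_t (H : IsReversedStieltjesStep K lam kap th b w s) (R : IsInterlacingRoots K b w s t)
    (hn : 1 ≤ n) (hnm : n < m) (hm : m ≤ K + 1) : s n < t m := by
  have h := (R.interlace (m - 1) (mem_Icc.2 ⟨by omega, by omega⟩)).2
  rw [Nat.sub_add_cancel (by omega)] at h
  exact (H.s_le hn (by omega) (by omega)).trans_lt h

theorem t_lt_s (H : IsReversedStieltjesStep K lam kap th b w s) (R : IsInterlacingRoots K b w s t)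
    (hm : 1 ≤ m) (hmn : m ≤ n) (hn : n ≤ K) : t m < s n :=
  (R.interlace m (mem_Icc.2 ⟨hm, hmn.trans hn⟩)).1.trans_le (H.s_le hm hmn hn)

theorem mul_s_lt_t (H : IsReversedStieltjesStep K lam kap th b w s)
    (R : IsInterlacingRoots K b w s t)
    (hm : m ∈ Icc 1 K) : 49 / 50 * s m < t m := by
  obtain ⟨hm1, hmK⟩ := mem_Icc.1 hm
  have hs := H.s_pos hm
  have hb : 0 < b := by linarith [H.thousand_mul_s_lt_b hm]
  have hw := H.w_pos m hm
  -- `c` is where the `m`-th term of `secular` equals `b / 2`, which makes `secular c < 0`.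
  set c := s m - 2 * w m / b with hc
  have hc_lt : c < s m := by
    have : 0 < 2 * w m / b := by positivity
    linarith
  have hc_gt : 49 / 50 * s m < c := by
    have : 2 * w m / b < s m / 50 := by
      rw [div_lt_iff₀ hb]; linarith [H.hundred_mul_w_lt hm]
    linarith
  have hFc : secular K b w s c < 0 := by
    have hterm : w m / (s m - c) = b / 2 := by rw [hc]; field_simp; ring
    have htail := H.sum_Ico_add_sum_Ioc_div_sub_lt hm (x := c)
      (fun k hk => by
        obtain ⟨hk1, hkm⟩ := mem_Ico.1 hk
        linarith [H.thousand_mul_s_lt hk1 hkm hmK, H.s_pos (mem_Icc.2 ⟨hk1, by omega⟩)])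
      (fun k hk => by
        obtain ⟨hmk, hkK⟩ := mem_Ioc.1 hk
        linarith [H.thousand_mul_s_lt hm1 hmk hkK])
    rw [secular_eq_add_sum_Ico_add_sum_Ioc hm, hterm]
    linarith [H.thousand_mul_s_lt_b hm]
  suffices hct : c < t m by linarith
  by_contra! hle
  have hmono := secular_le_secular (b := b) hle fun k hk => by
    refine ⟨(H.w_pos k hk).le, ?_⟩
    obtain ⟨hk1, hkK⟩ := mem_Icc.1 hk
    rcases lt_or_ge k m with hkm | hmk
    · exact Or.inl (H.s_lt_t R hk1 hkm (by omega))
    · exact Or.inr (hc_lt.trans_le (H.s_le hm1 hmk hkK))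
  rw [R.secular_eq_zero m (mem_Icc.2 ⟨hm1, by omega⟩)] at hmono
  linarith

theorem mul_b_le_w_div_sub_t (H : IsReversedStieltjesStep K lam kap th b w s)
    (R : IsInterlacingRoots K b w s t) (hm : m ∈ Icc 1 K) : 9 / 10 * b ≤ w m / (s m - t m) := by
  obtain ⟨hm1, hmK⟩ := mem_Icc.1 hm
  have hroot := R.secular_eq_zero m (mem_Icc.2 ⟨hm1, by omega⟩)
  have htm := H.t_lt_s R hm1 le_rfl hmK
  have htail := H.sum_Ico_add_sum_Ioc_div_sub_lt hm (x := t m)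
    (fun k hk => (H.s_lt_t R (mem_Ico.1 hk).1 (mem_Ico.1 hk).2 (by omega)).le)
    (fun k hk => by
      obtain ⟨hmk, hkK⟩ := mem_Ioc.1 hk
      linarith [H.thousand_mul_s_lt hm1 hmk hkK, H.mul_s_lt_t R hm, H.s_pos hm])
  rw [secular_eq_add_sum_Ico_add_sum_Ioc hm] at hroot
  linarith [H.thousand_mul_s_lt_b hm, H.s_pos hm]

theorem w_div_s_lt (H : IsReversedStieltjesStep K lam kap th b w s) (hn : n ∈ Ico 1 K) :
    w (n + 1) / s (n + 1) < (kap ^ (K - n))⁻¹ * b / 10 := by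
  have hn' : n + 1 ∈ Icc 1 K := by simp at hn ⊢; omega
  have h := H.pow_mul_w_lt hn'
  rw [show K - (n + 1) + 1 = K - n by simp at hn; omega] at h
  have hp : 0 < kap ^ (K - n) := pow_pos (by linarith [H.kap_gt]) _
  rw [div_lt_iff₀ (H.s_pos hn'), inv_mul_eq_div, div_div, div_mul_eq_mul_div,
    lt_div_iff₀ (by positivity)]
  linarith

theorem w_div_sub_t_succ_le (H : IsReversedStieltjesStep K lam kap th b w s)
    (R : IsInterlacingRoots K b w s t) (hn : n ∈ Ico 1 K) :
    w (n + 1) / (s (n + 1) - t (n + 1)) ≤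
      w n / (s n - t n) + (w (n + 1) / (s (n + 1) - t n) + w n / (t (n + 1) - s n)) := by
  obtain ⟨hn1, hnK⟩ := mem_Ico.1 hn
  have hn' : n + 1 ∈ Icc 1 K := mem_Icc.2 ⟨by omega, hnK⟩
  -- Apart from the `n`-th and `(n + 1)`-th terms, `secular` is monotone between the two roots.
  have hsplit : ∀ x, secular K b w s x = x - b + w n / (s n - x) + w (n + 1) / (s (n + 1) - x) +
      (∑ k ∈ Ico 1 n, w k / (s k - x) + ∑ k ∈ Ioc (n + 1) K, w k / (s k - x)) := fun x => by
    rw [secular_eq_add_sum_Ico_add_sum_Ioc hn', sum_Ico_succ_top hn1]; ring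
  have h0 := R.secular_eq_zero n (mem_Icc.2 ⟨hn1, by omega⟩)
  have h1 := R.secular_eq_zero (n + 1) (mem_Icc.2 ⟨by omega, by omega⟩)
  rw [hsplit] at h0 h1
  have htt : t n ≤ t (n + 1) := (H.t_lt_s R hn1 le_rfl hnK.le).le.trans
    (R.interlace n (mem_Icc.2 ⟨hn1, hnK.le⟩)).2.le
  have hlow := sum_div_sub_le_sum_div_sub (S := Ico 1 n) (w := w) (s := s) htt fun k hk =>
    ⟨(H.w_pos k (by simp at hk ⊢; omega)).le,
      Or.inl (H.s_lt_t R (mem_Ico.1 hk).1 (mem_Ico.1 hk).2 (by omega))⟩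
  have hhigh := sum_div_sub_le_sum_div_sub (S := Ioc (n + 1) K) (w := w) (s := s) htt fun k hk =>
    ⟨(H.w_pos k (by simp at hk ⊢; omega)).le,
      Or.inr (H.t_lt_s R (by omega) (mem_Ioc.1 hk).1.le (mem_Ioc.1 hk).2)⟩
  rw [← neg_sub (s n) (t (n + 1)), div_neg]
  linarith

theorem w_div_sub_add_w_div_sub_lt (H : IsReversedStieltjesStep K lam kap th b w s)
    (R : IsInterlacingRoots K b w s t) (hn : n ∈ Ico 1 K) :
    w (n + 1) / (s (n + 1) - t n) + w n / (t (n + 1) - s n) <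
      2 / 5 * ((kap ^ (K - n))⁻¹ * b) := by
  obtain ⟨hn1, hnK⟩ := mem_Ico.1 hn
  have hn' : n + 1 ∈ Icc 1 K := mem_Icc.2 ⟨by omega, hnK⟩
  have hnI : n ∈ Icc 1 K := Ico_subset_Icc_self hn
  have hs := H.s_pos hn'
  have hgap := H.thousand_mul_s_lt_succ hn
  have hsn := H.s_pos hnI
  have hwn := H.w_pos n hnI
  have h3 : w (n + 1) / (s (n + 1) - t n) ≤ w (n + 1) / (s (n + 1) / 2) :=
    div_le_div_of_nonneg_left (H.w_pos _ hn').le (by positivity)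
      (by linarith [H.t_lt_s R hn1 le_rfl hnK.le])
  have h4 : w n / (t (n + 1) - s n) ≤ w (n + 1) / (s (n + 1) / 2) :=
    (div_le_div_of_nonneg_left hwn.le (by positivity) (by linarith [H.mul_s_lt_t R hn'])).trans
      (div_le_div_of_nonneg_right (by linarith [H.ten_mul_w_lt hn]) (by positivity))
  have e : w (n + 1) / (s (n + 1) / 2) = 2 * (w (n + 1) / s (n + 1)) := by field_simp
  linarith [H.w_div_s_lt hn]

theorem sum_Ico_div_sub_t_succ_sq_le (H : IsReversedStieltjesStep K lam kap th b w s)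
    (R : IsInterlacingRoots K b w s t) (hn : n ∈ Ico 1 K) :
    ∑ k ∈ Ico 1 (n + 1), w k / (s k - t (n + 1)) ^ 2 ≤ 4 / 9 * (w (n + 1) / s (n + 1) ^ 2) := by
  obtain ⟨hn1, hnK⟩ := mem_Ico.1 hn
  have hn' : n + 1 ∈ Icc 1 K := mem_Icc.2 ⟨by omega, hnK⟩
  have hs := H.s_pos hn'
  calc ∑ k ∈ Ico 1 (n + 1), w k / (s k - t (n + 1)) ^ 2
      ≤ ∑ k ∈ Ico 1 (n + 1), w k / (s (n + 1) / 2) ^ 2 := sum_le_sum fun k hk => by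
        obtain ⟨hk1, hkn⟩ := mem_Ico.1 hk
        have hk : k ∈ Icc 1 K := mem_Icc.2 ⟨hk1, by omega⟩
        have hdist : s (n + 1) / 2 ≤ t (n + 1) - s k := by
          linarith [H.thousand_mul_s_lt hk1 hkn hnK, H.s_pos hk, H.mul_s_lt_t R hn']
        refine div_sq_le_div_sq (H.w_pos k hk).le (by positivity) ?_
        rw [abs_sub_comm]
        exact hdist.trans (le_abs_self _)
    _ = 4 / s (n + 1) ^ 2 * ∑ k ∈ Ico 1 (n + 1), w k := by
        rw [mul_sum]; exact sum_congr rfl fun k _ => by field_simp; ring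
    _ ≤ 4 / s (n + 1) ^ 2 * (w (n + 1) / 9) := by
        gcongr; linarith [H.nine_mul_sum_Ico_w_le hn']
    _ = 4 / 9 * (w (n + 1) / s (n + 1) ^ 2) := by ring

theorem sum_Ioc_div_sub_t_succ_sq_le (H : IsReversedStieltjesStep K lam kap th b w s)
    (R : IsInterlacingRoots K b w s t) (hn : n ∈ Ico 1 K) :
    ∑ k ∈ Ioc (n + 1) K, w k / (s k - t (n + 1)) ^ 2 ≤ 4 / 9 * (w (n + 1) / s (n + 1) ^ 2) := by
  obtain ⟨hn1, hnK⟩ := mem_Ico.1 hn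
  have hn' : n + 1 ∈ Icc 1 K := mem_Icc.2 ⟨by omega, hnK⟩
  calc ∑ k ∈ Ioc (n + 1) K, w k / (s k - t (n + 1)) ^ 2
      ≤ ∑ k ∈ Ioc (n + 1) K, 4 * (w k / s k ^ 2) := sum_le_sum fun k hk => by
        obtain ⟨hnk, hkK⟩ := mem_Ioc.1 hk
        have hk : k ∈ Icc 1 K := mem_Icc.2 ⟨by omega, hkK⟩
        have hsk := H.s_pos hk
        have hdist : s k / 2 ≤ s k - t (n + 1) := by
          linarith [H.thousand_mul_s_lt (by omega) hnk hkK, H.t_lt_s R (by omega) le_rfl hnK,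
            H.s_pos hn']
        calc w k / (s k - t (n + 1)) ^ 2 ≤ w k / (s k / 2) ^ 2 :=
              div_sq_le_div_sq (H.w_pos k hk).le (by positivity) (hdist.trans (le_abs_self _))
          _ = 4 * (w k / s k ^ 2) := by field_simp; ring
    _ ≤ 4 / 9 * (w (n + 1) / s (n + 1) ^ 2) := by
        rw [← mul_sum]; linarith [H.nine_mul_sum_Ioc_w_div_sq_le hn']

theorem mul_secularDeriv_succ_le (H : IsReversedStieltjesStep K lam kap th b w s)
    (R : IsInterlacingRoots K b w s t) (hn : n ∈ Ico 1 K) :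
    w (n + 1) * secularDeriv K w s (t (n + 1)) ≤
      w (n + 1) + (w (n + 1) / (s (n + 1) - t (n + 1))) ^ 2 + (w (n + 1) / s (n + 1)) ^ 2 := by
  have hn' : n + 1 ∈ Icc 1 K := by simp at hn ⊢; omega
  have hrest := mul_le_mul_of_nonneg_left
    (add_le_add (H.sum_Ico_div_sub_t_succ_sq_le R hn) (H.sum_Ioc_div_sub_t_succ_sq_le R hn))
    (H.w_pos _ hn').le
  have e1 : w (n + 1) * (w (n + 1) / (s (n + 1) - t (n + 1)) ^ 2) =
      (w (n + 1) / (s (n + 1) - t (n + 1))) ^ 2 := by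
    rw [div_pow]; ring
  have e2 : w (n + 1) * (w (n + 1) / s (n + 1) ^ 2) = (w (n + 1) / s (n + 1)) ^ 2 := by
    rw [div_pow]; ring
  rw [secularDeriv, sum_Icc_eq_sum_Ico_add_add_sum_Ioc_s11 _ hn']
  nlinarith [sq_nonneg (w (n + 1) / s (n + 1))]

theorem inv_kap_pow_le (H : IsReversedStieltjesStep K lam kap th b w s) (hn : n ∈ Ico 1 K) :
    (kap ^ (K - n))⁻¹ ≤ 1 / 10 := by
  have hkap : kap ≤ kap ^ (K - n) := le_self_pow₀ (by linarith [H.kap_gt]) (by simp at hn; omega)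
  rw [inv_le_comm₀ (by linarith [H.kap_gt]) (by norm_num)]
  linarith [H.kap_gt]

theorem w_succ_add_sq_le (H : IsReversedStieltjesStep K lam kap th b w s) (hn : n ∈ Ico 1 K) :
    w (n + 1) + (w (n + 1) / s (n + 1)) ^ 2 ≤ (kap ^ (K - n))⁻¹ * b ^ 2 / 500 := by
  have hn' : n + 1 ∈ Icc 1 K := by simp at hn ⊢; omega
  have hs := H.s_pos hn'
  have hε1 := H.inv_kap_pow_le hn
  set ε := (kap ^ (K - n))⁻¹
  have hε : 0 ≤ ε := inv_nonneg.2 (pow_nonneg (by linarith [H.kap_gt]) _)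
  have hq : w (n + 1) / s (n + 1) < ε * b / 10 := H.w_div_s_lt hn
  have hb : 0 < b := by linarith [H.thousand_mul_s_lt_b hn']
  have hw : w (n + 1) ≤ ε * b ^ 2 / 10000 := by
    have e : w (n + 1) = w (n + 1) / s (n + 1) * s (n + 1) := by field_simp
    have hsb : s (n + 1) ≤ b / 1000 := by linarith [H.thousand_mul_s_lt_b hn']
    rw [e]
    nlinarith [mul_lt_mul_of_pos_right hq hs,
      mul_le_mul_of_nonneg_left hsb (by positivity : (0 : ℝ) ≤ ε * b / 10)]
  have hsq : (w (n + 1) / s (n + 1)) ^ 2 ≤ (ε * b / 10) ^ 2 :=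
    pow_le_pow_left₀ (div_nonneg (H.w_pos _ hn').le hs.le) hq.le 2
  nlinarith [mul_le_mul_of_nonneg_right hε1 (mul_nonneg hε (sq_nonneg b))]

theorem mul_secularDeriv_succ_lt (H : IsReversedStieltjesStep K lam kap th b w s)
    (R : IsInterlacingRoots K b w s t) (hn : n ∈ Ico 1 K) :
    w (n + 1) * secularDeriv K w s (t (n + 1)) <
      (1 + (kap ^ (K - n))⁻¹) ^ 2 * (w n * secularDeriv K w s (t n)) := by
  obtain ⟨hn1, hnK⟩ := mem_Ico.1 hn
  have hn' : n + 1 ∈ Icc 1 K := mem_Icc.2 ⟨by omega, hnK⟩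
  have hnI : n ∈ Icc 1 K := Ico_subset_Icc_self hn
  have hb : 0 < b := by linarith [H.thousand_mul_s_lt_b hn', H.s_pos hn']
  have hε : 0 < (kap ^ (K - n))⁻¹ := inv_pos.2 (pow_pos (by linarith [H.kap_gt]) _)
  have hB' : 0 ≤ w (n + 1) / (s (n + 1) - t (n + 1)) :=
    div_nonneg (H.w_pos _ hn').le (sub_nonneg.2 (H.t_lt_s R (by omega) le_rfl hnK).le)
  have hBB : w (n + 1) / (s (n + 1) - t (n + 1)) ≤
      w n / (s n - t n) + 2 / 5 * ((kap ^ (K - n))⁻¹ * b) := by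
    linarith [H.w_div_sub_t_succ_le R hn, H.w_div_sub_add_w_div_sub_lt R hn]
  have hkey := add_sq_lt_one_add_sq_mul_sq hε (H.inv_kap_pow_le hn) hb
    (H.mul_b_le_w_div_sub_t R hnI) hB' hBB (H.w_succ_add_sq_le hn)
  calc w (n + 1) * secularDeriv K w s (t (n + 1))
      ≤ w (n + 1) + (w (n + 1) / (s (n + 1) - t (n + 1))) ^ 2 + (w (n + 1) / s (n + 1)) ^ 2 :=
        H.mul_secularDeriv_succ_le R hn
    _ < (1 + (kap ^ (K - n))⁻¹) ^ 2 * (w n / (s n - t n)) ^ 2 := by linarith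
    _ ≤ (1 + (kap ^ (K - n))⁻¹) ^ 2 * (w n * secularDeriv K w s (t n)) := by
        gcongr
        linarith [H.w_pos n hnI, add_sq_div_le_mul_secularDeriv (s := s) (x := t n)
          (fun k hk => (H.w_pos k hk).le) hnI]

theorem sum_w_lt_sq (H : IsReversedStieltjesStep K lam kap th b w s) (hK : 1 ≤ K) :
    100000 * ∑ k ∈ Icc 1 K, w k < b ^ 2 := by
  have hKI : K ∈ Icc 1 K := mem_Icc.2 ⟨hK, le_rfl⟩
  have hW : 0 ≤ ∑ k ∈ Icc 1 K, w k := sum_nonneg fun k hk => (H.w_pos k hk).le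
  have hsK := H.s_pos hKI
  have hb : 0 < b := by linarith [H.thousand_mul_s_lt_b hKI]
  nlinarith [H.ten_mul_kap_mul_sum_w_lt, H.kap_gt, H.thousand_mul_s_lt_b hKI,
    mul_lt_mul_of_pos_left (H.thousand_mul_s_lt_b hKI) hb]

theorem b_le_t_last (H : IsReversedStieltjesStep K lam kap th b w s)
    (R : IsInterlacingRoots K b w s t) : b ≤ t (K + 1) := by
  have h := R.secular_eq_zero (K + 1) (mem_Icc.2 ⟨by omega, le_rfl⟩)
  have hneg : ∑ k ∈ Icc 1 K, w k / (s k - t (K + 1)) ≤ 0 := sum_nonpos fun k hk =>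
    div_nonpos_of_nonneg_of_nonpos (H.w_pos k hk).le
      (sub_nonpos.2 (H.s_lt_t R (mem_Icc.1 hk).1 (by simp at hk; omega) le_rfl).le)
  unfold secular at h
  linarith

theorem half_b_le_t_last_sub (H : IsReversedStieltjesStep K lam kap th b w s)
    (R : IsInterlacingRoots K b w s t) (hm : m ∈ Icc 1 K) : b / 2 ≤ t (K + 1) - s m := by
  linarith [H.b_le_t_last R, H.thousand_mul_s_lt_b hm, H.s_pos hm]

theorem t_last_le (H : IsReversedStieltjesStep K lam kap th b w s)
    (R : IsInterlacingRoots K b w s t) (hK : 1 ≤ K) : t (K + 1) ≤ (1 + 1 / 10000) * b := by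
  have hKI : K ∈ Icc 1 K := mem_Icc.2 ⟨hK, le_rfl⟩
  have hb : 0 < b := by linarith [H.thousand_mul_s_lt_b hKI, H.s_pos hKI]
  have hterm : ∀ k ∈ Icc 1 K, -(2 / b * w k) ≤ w k / (s k - t (K + 1)) := fun k hk => by
    rw [← neg_sub (t (K + 1)) (s k), div_neg, neg_le_neg_iff]
    calc w k / (t (K + 1) - s k) ≤ w k / (b / 2) :=
          div_le_div_of_nonneg_left (H.w_pos k hk).le (by positivity)
            (H.half_b_le_t_last_sub R hk)
      _ = 2 / b * w k := by field_simp
  have hsum := sum_le_sum hterm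
  rw [sum_neg_distrib, ← mul_sum] at hsum
  have hW : 2 / b * ∑ k ∈ Icc 1 K, w k ≤ b / 10000 := by
    rw [div_mul_eq_mul_div, div_le_div_iff₀ hb (by norm_num)]
    nlinarith [H.sum_w_lt_sq hK]
  have h := R.secular_eq_zero (K + 1) (mem_Icc.2 ⟨by omega, le_rfl⟩)
  unfold secular at h
  linarith

theorem secularDeriv_t_last_le (H : IsReversedStieltjesStep K lam kap th b w s)
    (R : IsInterlacingRoots K b w s t) (hK : 1 ≤ K) :
    secularDeriv K w s (t (K + 1)) ≤ 1 + 1 / 10000 := by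
  have hKI : K ∈ Icc 1 K := mem_Icc.2 ⟨hK, le_rfl⟩
  have hb : 0 < b := by linarith [H.thousand_mul_s_lt_b hKI, H.s_pos hKI]
  have hterm : ∀ k ∈ Icc 1 K, w k / (s k - t (K + 1)) ^ 2 ≤ 4 / b ^ 2 * w k := fun k hk => by
    calc w k / (s k - t (K + 1)) ^ 2 ≤ w k / (b / 2) ^ 2 :=
          div_sq_le_div_sq (H.w_pos k hk).le (by positivity)
            ((H.half_b_le_t_last_sub R hk).trans (by rw [abs_sub_comm]; exact le_abs_self _))
      _ = 4 / b ^ 2 * w k := by field_simp; ring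
  have hsum := sum_le_sum hterm
  rw [← mul_sum] at hsum
  have hW : 4 / b ^ 2 * ∑ k ∈ Icc 1 K, w k ≤ 1 / 10000 := by
    rw [div_mul_eq_mul_div, div_le_div_iff₀ (by positivity) (by norm_num)]
    nlinarith [H.sum_w_lt_sq hK]
  rw [secularDeriv]
  linarith

theorem kap_mul_t_last_mul_secularDeriv_lt (H : IsReversedStieltjesStep K lam kap th b w s)
    (R : IsInterlacingRoots K b w s t) (hK : 1 ≤ K) :
    kap * t (K + 1) * secularDeriv K w s (t (K + 1)) < secularDeriv K w s (t K) * t K := by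
  have hKI : K ∈ Icc 1 K := mem_Icc.2 ⟨hK, le_rfl⟩
  have hb : 0 < b := by linarith [H.thousand_mul_s_lt_b hKI, H.s_pos hKI]
  have hkap : 0 < kap := by linarith [H.kap_gt]
  have hw := H.w_pos K hKI
  have hlast : kap * t (K + 1) * secularDeriv K w s (t (K + 1)) ≤ 2 * (kap * b) := by
    have ht := H.t_last_le R hK
    have hD := H.secularDeriv_t_last_le R hK
    have h0 : 0 ≤ t (K + 1) := hb.le.trans (H.b_le_t_last R)
    have hD1 := one_le_secularDeriv (s := s) (x := t (K + 1)) fun k hk => (H.w_pos k hk).le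
    have h1 : t (K + 1) * secularDeriv K w s (t (K + 1)) ≤ (1 + 1 / 10000) * b * (1 + 1 / 10000) :=
      mul_le_mul ht hD (by linarith) (by positivity)
    nlinarith [mul_le_mul_of_nonneg_left h1 hkap.le]
  have hsq : (9 / 10 * b) ^ 2 ≤ (w K / (s K - t K)) ^ 2 :=
    pow_le_pow_left₀ (by positivity) (H.mul_b_le_w_div_sub_t R hKI) 2
  have hwD := add_sq_div_le_mul_secularDeriv (s := s) (x := t K) (fun k hk => (H.w_pos k hk).le) hKI
  have htK := H.mul_s_lt_t R hKI
  have hsK := H.s_pos hKI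
  have hprod : 81 / 100 * b ^ 2 * (49 / 50 * s K) ≤ w K * (secularDeriv K w s (t K) * t K) := by
    have h1 : 81 / 100 * b ^ 2 ≤ w K * secularDeriv K w s (t K) := by nlinarith
    nlinarith [mul_le_mul h1 htK.le (by linarith) (le_trans (by positivity) h1)]
  have hfirst : w K * (3 * (kap * b)) < w K * (secularDeriv K w s (t K) * t K) := by
    nlinarith [mul_lt_mul_of_pos_left (H.ten_mul_kap_mul_w_lt hK) hb]
  nlinarith [lt_of_mul_lt_mul_left hfirst hw.le]

end IsReversedStieltjesStep

theorem stmt11_general (N : ℕ) (hN : 2 ≤ N) (lam kap th b : ℝ)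
    (w s t μ : ℕ → ℝ)
    (hlam : 1000 < lam) (hkap : 10 < kap) (hth : th < 1 / 10)
    (hwpos : ∀ n ∈ Finset.Icc 1 (N - 1), 0 < w n)
    (hb : lam * s (N - 1) < b)
    (hs : ∀ n ∈ Finset.Icc 1 (N - 2), lam * s n < s (n + 1) ∧ 0 < s n)
    (hs1 : 0 < s 1)
    (hwgrow : ∀ n ∈ Finset.Icc 1 (N - 2), kap * (s (n + 1) / s n) < w (n + 1) / w n)
    (hwdec : ∀ n ∈ Finset.Icc 1 (N - 2), w (n + 1) / s (n + 1) ^ 2 < th * (w n / s n ^ 2))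
    (hsum2 : ∑ k ∈ Finset.Icc 1 (N - 1), w k < 1 / 10 * kap⁻¹ * (b * s (N - 1)))
    (hroot : ∀ n ∈ Finset.Icc 1 N,
      t n - b + ∑ k ∈ Finset.Icc 1 (N - 1), w k / (s k - t n) = 0)
    (hint : ∀ n ∈ Finset.Icc 1 (N - 1), t n < s n ∧ s n < t (n + 1))
    (hμ : ∀ n ∈ Finset.Icc 1 N,
      μ n = (1 + ∑ k ∈ Finset.Icc 1 (N - 1), w k / (s k - t n) ^ 2)⁻¹) :
    (∀ n ∈ Finset.Icc 1 (N - 2),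
      w (n + 1) / w n <
        (1 + kap ^ ((n : ℤ) - (N : ℤ) + 1)) ^ 2 * (μ (n + 1) / μ n)) ∧
    kap * (t N / t (N - 1)) < μ N / μ (N - 1) := by
  obtain ⟨K, rfl⟩ : ∃ K, N = K + 1 := ⟨N - 1, by omega⟩
  have hK : 1 ≤ K := by omega
  have hIco : ∀ n, n ∈ Ico 1 K ↔ n ∈ Icc 1 (K + 1 - 2) := fun n => by simp; omega
  simp only [Nat.add_sub_cancel] at *
  have H : IsReversedStieltjesStep K lam kap th b w s :=
    ⟨hlam, hkap, hth, hwpos, hs1, fun n hn => (hs n ((hIco n).1 hn)).1, hb,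
      fun n hn => hwgrow n ((hIco n).1 hn), fun n hn => hwdec n ((hIco n).1 hn), hsum2⟩
  have R : IsInterlacingRoots K b w s t := ⟨hroot, hint⟩
  have hD : ∀ m ∈ Icc 1 (K + 1), μ m = (secularDeriv K w s (t m))⁻¹ := hμ
  have hDpos : ∀ m, 0 < secularDeriv K w s (t m) := fun m =>
    zero_lt_one.trans_le (one_le_secularDeriv fun k hk => (H.w_pos k hk).le)
  refine ⟨fun n hn => ?_, ?_⟩
  · obtain ⟨hn1, hnK⟩ := mem_Ico.1 ((hIco n).2 hn)
    have hε : kap ^ ((n : ℤ) - ((K + 1 : ℕ) : ℤ) + 1) = (kap ^ (K - n))⁻¹ := by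
      rw [show (n : ℤ) - ((K + 1 : ℕ) : ℤ) + 1 = -((K - n : ℕ) : ℤ) by omega, zpow_neg,
        zpow_natCast]
    rw [hε, hD n (mem_Icc.2 ⟨hn1, by omega⟩), hD (n + 1) (mem_Icc.2 ⟨by omega, by omega⟩),
      inv_div_inv, div_lt_iff₀ (H.w_pos n (mem_Icc.2 ⟨hn1, hnK.le⟩)), mul_div_assoc',
      div_mul_eq_mul_div, lt_div_iff₀ (hDpos _)]
    linarith [H.mul_secularDeriv_succ_lt R ((hIco n).2 hn)]
  · have htK : 0 < t K := by
      linarith [H.mul_s_lt_t R (mem_Icc.2 ⟨hK, le_rfl⟩), H.s_pos (mem_Icc.2 ⟨hK, le_rfl⟩)]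
    rw [hD K (mem_Icc.2 ⟨hK, by omega⟩), hD (K + 1) (mem_Icc.2 ⟨by omega, le_rfl⟩), inv_div_inv,
      ← mul_div_assoc, div_lt_div_iff₀ htK (hDpos _)]
    exact H.kap_mul_t_last_mul_secularDeriv_lt R hK

/-- Lower bound for the new weights after one step of the reversed Stieltjes algorithm. -/
theorem stmt11 (N : ℕ) (hN : 2 ≤ N) (lam kap th b : ℝ)
    (w s t μ : ℕ → ℝ)
    (hlam : 1000 < lam) (hkap : 10 < kap) (hth : th < 1 / 10)
    (hwpos : ∀ n ∈ Finset.Icc 1 (N - 1), 0 < w n)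
    (hb : lam * s (N - 1) < b)
    (hs : ∀ n ∈ Finset.Icc 1 (N - 2), lam * s n < s (n + 1) ∧ 0 < s n)
    (hs1 : 0 < s 1)
    (hwgrow : ∀ n ∈ Finset.Icc 1 (N - 2), kap * (s (n + 1) / s n) < w (n + 1) / w n)
    (hwdec : ∀ n ∈ Finset.Icc 1 (N - 2), w (n + 1) / s (n + 1) ^ 2 < th * (w n / s n ^ 2))
    (hsum1 : 10 * th⁻¹ * s (N - 1) ^ 2 < ∑ k ∈ Finset.Icc 1 (N - 1), w k)
    (hsum2 : ∑ k ∈ Finset.Icc 1 (N - 1), w k < 1 / 10 * kap⁻¹ * (b * s (N - 1)))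
    (hroot : ∀ n ∈ Finset.Icc 1 N,
      t n - b + ∑ k ∈ Finset.Icc 1 (N - 1), w k / (s k - t n) = 0)
    (hint : ∀ n ∈ Finset.Icc 1 (N - 1), t n < s n ∧ s n < t (n + 1))
    (hμ : ∀ n ∈ Finset.Icc 1 N,
      μ n = (1 + ∑ k ∈ Finset.Icc 1 (N - 1), w k / (s k - t n) ^ 2)⁻¹) :
    (∀ n ∈ Finset.Icc 1 (N - 2),
      w (n + 1) / w n <
        (1 + kap ^ ((n : ℤ) - (N : ℤ) + 1)) ^ 2 * (μ (n + 1) / μ n)) ∧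
    kap * (t N / t (N - 1)) < μ N / μ (N - 1) :=
  stmt11_general N hN lam kap th b w s t μ hlam hkap hth hwpos hb hs hs1 hwgrow hwdec hsum2 hroot
    hint hμ
end

section
/- Suppose Σ_{k=1}^N μ_k/(t_k - s_n) = 0 and Σ_{k=1}^N μ_k/(t_k - s_{n+1}) = 0, where t_1 < s_1 < t_2 < ... < s_{N-1} < t_N. Then μ_{n+1}/(s_{n+1} - t_{n+1}) = (μ_n/(s_n - t_n))·(t_{n+1} - s_n)/(s_{n+1} - t_n) + Σ_{k≠n,n+1} μ_k (t_{n+1} - s_n)/((s_{n+1} - t_k)(s_n - t_k)). -/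
/-!
By partial fractions, the difference of the zero equations at `s n` and `s (n + 1)` is
`(s (n + 1) - s n) * ∑ μ k / ((s n - t k) * (s (n + 1) - t k))`, so this sum vanishes; the
identity is that relation with the terms `k = n, n + 1` isolated, multiplied by `t (n + 1) - s n`.
-/

open Finset

theorem sum_div_mul_sub_eq_zero_of_cauchy_zeros {ι 𝕜 : Type*} [Field 𝕜] (S : Finset ι)
    (μ t : ι → 𝕜) {a b : 𝕜} (hab : a ≠ b)
    (ha : ∀ k ∈ S, t k ≠ a) (hb : ∀ k ∈ S, t k ≠ b)
    (hroot_a : ∑ k ∈ S, μ k / (t k - a) = 0) (hroot_b : ∑ k ∈ S, μ k / (t k - b) = 0) :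
    ∑ k ∈ S, μ k / ((a - t k) * (b - t k)) = 0 := by
  have hdiff : (b - a) * ∑ k ∈ S, μ k / ((a - t k) * (b - t k)) =
      ∑ k ∈ S, μ k / (t k - b) - ∑ k ∈ S, μ k / (t k - a) := by
    rw [mul_sum, ← sum_sub_distrib]
    refine sum_congr rfl fun k hk => ?_
    have hka := sub_ne_zero.mpr (ha k hk)
    have hkb := sub_ne_zero.mpr (hb k hk)
    have hakt := sub_ne_zero.mpr (ha k hk).symm
    have hbkt := sub_ne_zero.mpr (hb k hk).symm
    field_simp
    ring
  rw [hroot_a, hroot_b, sub_self] at hdiff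
  exact (mul_eq_zero.mp hdiff).resolve_left (sub_ne_zero.mpr hab.symm)

section Interlacing

variable {N : ℕ} {t s : ℕ → ℝ}

theorem monotoneOn_of_interlacing (hint : ∀ k ∈ Icc 1 (N - 1), t k < s k ∧ s k < t (k + 1)) :
    MonotoneOn t (Set.Icc 1 N) :=
  monotoneOn_of_le_add_one Set.ordConnected_Icc fun k _ hk hk1 => by
    have h := hint k (mem_Icc.mpr ⟨hk.1, by have := hk1.2; omega⟩)
    exact (h.1.trans h.2).le

theorem ne_of_interlacing (hint : ∀ k ∈ Icc 1 (N - 1), t k < s k ∧ s k < t (k + 1))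
    {m k : ℕ} (hm : m ∈ Icc 1 (N - 1)) (hk : k ∈ Icc 1 N) :
    t k ≠ s m := by
  have hmono := monotoneOn_of_interlacing hint
  obtain ⟨hts, hst⟩ := hint m hm
  rw [mem_Icc] at hm hk
  rcases le_or_gt k m with hkm | hmk
  · exact (lt_of_le_of_lt (hmono ⟨hk.1, hk.2⟩ ⟨hm.1, by omega⟩ hkm) hts).ne
  · exact (hst.trans_le (hmono ⟨by omega, by omega⟩ ⟨hk.1, hk.2⟩ hmk)).ne'

end Interlacing

theorem stmt18_general (N n : ℕ) (μ t s : ℕ → ℝ)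
    (hint : ∀ k ∈ Finset.Icc 1 (N - 1), t k < s k ∧ s k < t (k + 1))
    (hn1 : 1 ≤ n) (hn2 : n ≤ N - 2)
    (hroot1 : ∑ k ∈ Finset.Icc 1 N, μ k / (t k - s n) = 0)
    (hroot2 : ∑ k ∈ Finset.Icc 1 N, μ k / (t k - s (n + 1)) = 0) :
    μ (n + 1) / (s (n + 1) - t (n + 1)) =
      μ n / (s n - t n) * ((t (n + 1) - s n) / (s (n + 1) - t n)) +
        ∑ k ∈ Finset.Icc 1 N \ {n, n + 1},
          μ k * (t (n + 1) - s n) / ((s (n + 1) - t k) * (s n - t k)) := by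
  have hsn : n ∈ Icc 1 (N - 1) := mem_Icc.mpr ⟨hn1, by omega⟩
  have hsn1 : n + 1 ∈ Icc 1 (N - 1) := mem_Icc.mpr ⟨by omega, by omega⟩
  have hne k (hk : k ∈ Icc 1 N) := ne_of_interlacing hint hsn hk
  have hne1 k (hk : k ∈ Icc 1 N) := ne_of_interlacing hint hsn1 hk
  have hss : s n ≠ s (n + 1) := ((hint n hsn).2.trans (hint (n + 1) hsn1).1).ne
  have hpair : {n, n + 1} ⊆ Icc 1 N := by
    simp only [insert_subset_iff, singleton_subset_iff, mem_Icc]; omega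
  have hsum := sum_div_mul_sub_eq_zero_of_cauchy_zeros _ μ t hss hne hne1 hroot1 hroot2
  rw [← sum_sdiff hpair, sum_pair (by omega)] at hsum
  have hrest : ∑ k ∈ Icc 1 N \ {n, n + 1},
      μ k * (t (n + 1) - s n) / ((s (n + 1) - t k) * (s n - t k)) =
        (t (n + 1) - s n) *
          ∑ k ∈ Icc 1 N \ {n, n + 1}, μ k / ((s n - t k) * (s (n + 1) - t k)) := by
    rw [mul_sum]
    exact sum_congr rfl fun k _ => by ring
  have h0 := sub_ne_zero.mpr (hne n (hpair (by simp))).symm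
  have h1 := sub_ne_zero.mpr (hne1 n (hpair (by simp))).symm
  have h2 := sub_ne_zero.mpr (hne (n + 1) (hpair (by simp))).symm
  have h3 := sub_ne_zero.mpr (hne1 (n + 1) (hpair (by simp))).symm
  rw [hrest, eq_neg_of_add_eq_zero_left hsum]
  field_simp
  ring

/-- Identity obtained by subtracting the zero equation at `s_n` from the one at
`s_{n+1}` for consecutive zeros of the Cauchy transform. -/
theorem stmt18 (N n : ℕ) (μ t s : ℕ → ℝ)
    (hμpos : ∀ k ∈ Finset.Icc 1 N, 0 < μ k)
    (hint : ∀ k ∈ Finset.Icc 1 (N - 1), t k < s k ∧ s k < t (k + 1))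
    (hn1 : 1 ≤ n) (hn2 : n ≤ N - 2)
    (hroot1 : ∑ k ∈ Finset.Icc 1 N, μ k / (t k - s n) = 0)
    (hroot2 : ∑ k ∈ Finset.Icc 1 N, μ k / (t k - s (n + 1)) = 0) :
    μ (n + 1) / (s (n + 1) - t (n + 1)) =
      μ n / (s n - t n) * ((t (n + 1) - s n) / (s (n + 1) - t n)) +
        ∑ k ∈ Finset.Icc 1 N \ {n, n + 1},
          μ k * (t (n + 1) - s n) / ((s (n + 1) - t k) * (s n - t k)) :=
  stmt18_general N n μ t s hint hn1 hn2 hroot1 hroot2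
end
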